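/- arXiv:2011.07714 — 11 statements merged into one kernel-verified Lean document; each statement's English description precedes it below -/
import Mathlib

section
/- Let n = 3 with r_1 ≥ 2, or n ≥ 4. Then the quotient of the free abelian group ℤ^{d+n} by the subgroup generated by the vectors w_e, where e ranges over all edges of the complete multipartite graph K_{r_1,…,r_n}, is isomorphic to ℤ^n as an abelian group. (This quotient computes the divisor class group of the edge ring k[K_{r_1,…,r_n}], so Cl(k[K_{r_1,…,r_n}]) ≅ ℤ^n.) -/
/-!
Write `e a`, `f k` for the standard generators of `ℤ^V × ℤ^ι` and `u a = e a - f (c a)`, so that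
`w_{ab} = u a + u b + ∑ₖ f k`. As soon as no two blocks cover all vertices, comparing `w_{ab}`
with `w_{a'b}` for `b` outside the blocks of `a` and `a'` shows that all `u a` are congruent
modulo the edge lattice, to `u` say, and then `w_{ab}` says `2 u + ∑ₖ f k ≡ 0`. Hence the quotient
is generated by `u` and the `f k` subject to this single relation, i.e. it is free on
`e a₀ = u + f i₀` and the `f k` with `k ≠ i₀`, where `i₀ = c a₀`. The isomorphism with `ℤ^ι`
sends `e a₀ ↦ δ i₀`, `f k ↦ δ k` for `k ≠ i₀`, hence `u ↦ -1` and `f i₀ ↦ δ i₀ + 1`.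
-/

/-- The vector `w_e ∈ ℤ^d ⊕ ℤ^n` associated to the edge `e = {a,b}` of the complete
multipartite graph whose block assignment is `blk`: its `ℤ^d`-component is `e_a + e_b`
and its `ℤ^n`-component is the sum of the unit vectors `e_k` over blocks
`k ∉ {blk a, blk b}`. -/
def wvec (n d : ℕ) (blk : Fin d → ℕ) (a b : Fin d) : (Fin d → ℤ) × (Fin n → ℤ) :=
  (fun k => (if k = a then 1 else 0) + (if k = b then 1 else 0),
   fun i => if (i : ℕ) = blk a ∨ (i : ℕ) = blk b then 0 else 1)

theorem AddMonoidHom.ker_eq_of_sub_mem {G H : Type*} [AddGroup G] [AddGroup H]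
    {L : AddSubgroup G} {φ : G →+ H} (ρ : H →+ G) (hL : L ≤ φ.ker)
    (hρ : ∀ v, ρ (φ v) - v ∈ L) : φ.ker = L := by
  refine le_antisymm (fun v hv => ?_) hL
  simpa [(mem_ker).mp hv] using neg_mem (hρ v)

namespace MultipartiteEdgeLattice

def shear {ι : Type*} (i₀ : ι) : (ι → ℤ) →ₗ[ℤ] ι → ℤ :=
  LinearMap.id + (LinearMap.proj i₀).smulRight 1

theorem shear_apply {ι : Type*} (i₀ : ι) (y : ι → ℤ) : shear i₀ y = y + y i₀ • 1 := rfl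

variable {V ι : Type*} [DecidableEq ι]

variable (c : V → ι)

def NotCoveredByTwoBlocks : Prop := ∀ i j, ∃ b, c b ≠ i ∧ c b ≠ j

theorem notCoveredByTwoBlocks_of_surjective [Fintype ι] (hc : c.Surjective)
    (hι : 3 ≤ Fintype.card ι) : NotCoveredByTwoBlocks c := by
  intro i j
  have hcard : ({i, j} : Finset ι).card < (Finset.univ : Finset ι).card := by
    rw [Finset.card_univ]
    exact Finset.card_le_two.trans_lt hι
  obtain ⟨k, -, hk⟩ := Finset.exists_mem_notMem_of_card_lt_card hcard
  obtain ⟨b, rfl⟩ := hc k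
  exact ⟨b, by simpa [not_or] using hk⟩

def coordMap [Fintype V] (i₀ : ι) : (V → ℤ) × (ι → ℤ) →ₗ[ℤ] ι → ℤ :=
  (Fintype.linearCombination ℤ fun a => shear i₀ (Pi.single (c a) 1) - 1).coprod (shear i₀)

theorem coordMap_inr [Fintype V] (i₀ : ι) (y : ι → ℤ) : coordMap c i₀ (0, y) = shear i₀ y := by
  simp [coordMap]

variable [DecidableEq V]

def edgeVec (a b : V) : (V → ℤ) × (ι → ℤ) :=
  (Pi.single a 1 + Pi.single b 1, fun k => if k = c a ∨ k = c b then 0 else 1)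

def edgeLattice : AddSubgroup ((V → ℤ) × (ι → ℤ)) :=
  AddSubgroup.closure {v | ∃ a b, c a ≠ c b ∧ v = edgeVec c a b}

def vertexVec (a : V) : (V → ℤ) × (ι → ℤ) := (Pi.single a 1, -Pi.single (c a) 1)

def sectionMap (a₀ : V) : (ι → ℤ) →ₗ[ℤ] (V → ℤ) × (ι → ℤ) :=
  LinearMap.inr ℤ _ _ + (LinearMap.proj (c a₀)).smulRight (vertexVec c a₀)

variable {c}

theorem sectionMap_apply (a₀ : V) (x : ι → ℤ) :
    sectionMap c a₀ x = (0, x) + x (c a₀) • vertexVec c a₀ := rfl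

theorem edgeVec_eq {a b : V} (hab : c a ≠ c b) :
    edgeVec c a b = vertexVec c a + vertexVec c b + (0, 1) := by
  ext k
  · simp [edgeVec, vertexVec]
  · simp only [edgeVec, vertexVec, Prod.snd_add, Pi.add_apply, Pi.neg_apply, Pi.single_apply,
      Pi.one_apply]
    split_ifs <;> simp_all

theorem edgeVec_mem_edgeLattice {a b : V} (hab : c a ≠ c b) : edgeVec c a b ∈ edgeLattice c :=
  AddSubgroup.subset_closure ⟨a, b, hab, rfl⟩

theorem vertexVec_sub_mem_edgeLattice (h3 : NotCoveredByTwoBlocks c) (a a' : V) :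
    vertexVec c a - vertexVec c a' ∈ edgeLattice c := by
  obtain ⟨b, hba, hba'⟩ := h3 (c a) (c a')
  have h := sub_mem (edgeVec_mem_edgeLattice (Ne.symm hba))
    (edgeVec_mem_edgeLattice (Ne.symm hba'))
  rwa [edgeVec_eq (Ne.symm hba), edgeVec_eq (Ne.symm hba'), add_sub_add_right_eq_sub,
    add_sub_add_right_eq_sub] at h

theorem two_vertexVec_add_mem_edgeLattice (h3 : NotCoveredByTwoBlocks c) (a : V) :
    2 • vertexVec c a + (0, 1) ∈ edgeLattice c := by
  obtain ⟨b, hb, -⟩ := h3 (c a) (c a)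
  have h := add_mem (edgeVec_mem_edgeLattice (Ne.symm hb)) (vertexVec_sub_mem_edgeLattice h3 a b)
  rw [edgeVec_eq (Ne.symm hb)] at h
  convert h using 1
  abel

theorem sectionMap_shear (a₀ : V) (y : ι → ℤ) :
    sectionMap c a₀ (shear (c a₀) y) = (0, y) + y (c a₀) • (2 • vertexVec c a₀ + (0, 1)) := by
  rw [shear_apply, map_add, map_zsmul, sectionMap_apply, sectionMap_apply, Pi.one_apply, one_smul]
  module

section Coordinates

variable [Fintype V]

theorem coordMap_vertexVec (i₀ : ι) (a : V) : coordMap c i₀ (vertexVec c a) = -1 := by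
  simp only [coordMap, vertexVec, LinearMap.coprod_apply, Fintype.linearCombination_apply_single,
    one_smul, map_neg]
  abel

theorem coordMap_edgeVec (i₀ : ι) {a b : V} (hab : c a ≠ c b) :
    coordMap c i₀ (edgeVec c a b) = 0 := by
  rw [edgeVec_eq hab, map_add, map_add, coordMap_vertexVec, coordMap_vertexVec, coordMap_inr,
    shear_apply]
  simp

theorem edgeLattice_le_ker_coordMap (i₀ : ι) :
    edgeLattice c ≤ (coordMap c i₀).toAddMonoidHom.ker := by
  refine (AddSubgroup.closure_le _).2 ?_
  rintro _ ⟨a, b, hab, rfl⟩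
  exact coordMap_edgeVec i₀ hab

theorem coordMap_sectionMap (a₀ : V) (x : ι → ℤ) :
    coordMap c (c a₀) (sectionMap c a₀ x) = x := by
  rw [sectionMap_apply, map_add, map_zsmul, coordMap_inr, coordMap_vertexVec, shear_apply]
  simp

theorem sectionMap_coordMap_inr_sub_mem (h3 : NotCoveredByTwoBlocks c) (a₀ : V) (y : ι → ℤ) :
    sectionMap c a₀ (coordMap c (c a₀) (0, y)) - (0, y) ∈ edgeLattice c := by
  rw [coordMap_inr, sectionMap_shear, add_sub_cancel_left]
  exact AddSubgroup.zsmul_mem _ (two_vertexVec_add_mem_edgeLattice h3 a₀) _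

theorem sectionMap_coordMap_vertexVec_sub_mem (h3 : NotCoveredByTwoBlocks c) (a₀ : V)
    (a : V) :
    sectionMap c a₀ (coordMap c (c a₀) (vertexVec c a)) - vertexVec c a ∈ edgeLattice c := by
  have h := sub_mem (vertexVec_sub_mem_edgeLattice h3 a₀ a)
    (two_vertexVec_add_mem_edgeLattice h3 a₀)
  rw [coordMap_vertexVec, map_neg, sectionMap_apply, Pi.one_apply, one_smul]
  convert h using 1
  abel

theorem sectionMap_coordMap_sub_mem (h3 : NotCoveredByTwoBlocks c) (a₀ : V)
    (v : (V → ℤ) × (ι → ℤ)) :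
    sectionMap c a₀ (coordMap c (c a₀) v) - v ∈ edgeLattice c := by
  suffices (QuotientAddGroup.mk' (edgeLattice c)).toIntLinearMap ∘ₗ
      (sectionMap c a₀ ∘ₗ coordMap c (c a₀) - LinearMap.id) = 0 from
    (QuotientAddGroup.eq_zero_iff _).mp (by simpa using LinearMap.congr_fun this v)
  ext a <;> simp only [LinearMap.comp_apply, LinearMap.sub_apply, LinearMap.zero_apply,
    LinearMap.id_apply, AddMonoidHom.coe_toIntLinearMap, QuotientAddGroup.mk'_apply,
    QuotientAddGroup.eq_zero_iff]
  · have hsplit : ((Pi.single a 1, 0) : (V → ℤ) × (ι → ℤ)) =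
        vertexVec c a + (0, Pi.single (c a) 1) := by
      simp [vertexVec]
    rw [LinearMap.inl_apply, LinearMap.single_apply, hsplit, map_add, map_add, add_sub_add_comm]
    exact add_mem (sectionMap_coordMap_vertexVec_sub_mem h3 a₀ a)
      (sectionMap_coordMap_inr_sub_mem h3 a₀ _)
  · exact sectionMap_coordMap_inr_sub_mem h3 a₀ a

def quotientEdgeLatticeEquiv (h3 : NotCoveredByTwoBlocks c) (a₀ : V) :
    ((V → ℤ) × (ι → ℤ)) ⧸ edgeLattice c ≃+ (ι → ℤ) :=
  (QuotientAddGroup.quotientAddEquivOfEq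
      (AddMonoidHom.ker_eq_of_sub_mem (sectionMap c a₀).toAddMonoidHom
        (edgeLattice_le_ker_coordMap (c a₀)) (sectionMap_coordMap_sub_mem h3 a₀)).symm).trans
    (QuotientAddGroup.quotientKerEquivOfRightInverse _ _ (coordMap_sectionMap a₀))

end Coordinates

end MultipartiteEdgeLattice

open MultipartiteEdgeLattice

theorem wvec_eq_edgeVec {n d : ℕ} {blk : Fin d → ℕ} (hblkn : ∀ a, blk a < n) (a b : Fin d) :
    wvec n d blk a b = edgeVec (fun a => (⟨blk a, hblkn a⟩ : Fin n)) a b := by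
  ext k
  · simp [wvec, edgeVec, Pi.single_apply]
  · simp [wvec, edgeVec, Fin.ext_iff]

theorem stmt_0_general (n : ℕ) (r : ℕ → ℕ)
    (hr1 : ∀ i < n, 1 ≤ r i)
    (d : ℕ)
    (blk : Fin d → ℕ) (hblkn : ∀ a, blk a < n)
    (hcard : ∀ i < n, (Finset.univ.filter (fun a : Fin d => blk a = i)).card = r i)
    (hcase : (n = 3 ∧ 2 ≤ r 0) ∨ 4 ≤ n) :
    Nonempty ((((Fin d → ℤ) × (Fin n → ℤ)) ⧸
      AddSubgroup.closure {v | ∃ a b : Fin d, blk a ≠ blk b ∧ v = wvec n d blk a b})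
      ≃+ (Fin n → ℤ)) := by
  set c : Fin d → Fin n := fun a => ⟨blk a, hblkn a⟩
  have hgen : {v | ∃ a b : Fin d, blk a ≠ blk b ∧ v = wvec n d blk a b} =
      {v | ∃ a b, c a ≠ c b ∧ v = edgeVec c a b} := by
    simp only [c, wvec_eq_edgeVec hblkn, ne_eq, Fin.mk.injEq]
  have hblock : ∀ i < n, ∃ a, blk a = i := fun i hi => by
    obtain ⟨a, ha⟩ := Finset.card_pos.mp (hcard i hi ▸ hr1 i hi)
    exact ⟨a, (Finset.mem_filter.mp ha).2⟩
  have h3 : NotCoveredByTwoBlocks c :=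
    notCoveredByTwoBlocks_of_surjective c
      (fun i => (hblock i i.isLt).imp fun _ ha => Fin.ext ha) (by rw [Fintype.card_fin]; omega)
  obtain ⟨a₀, -⟩ := hblock 0 (by omega)
  rw [hgen]
  exact ⟨quotientEdgeLatticeEquiv h3 a₀⟩

/-- Theorem (class group of the edge ring of a complete multipartite graph):
if `n = 3` with `r 0 ≥ 2`, or `n ≥ 4`, then `ℤ^{d+n}` modulo the subgroup generated by
the vectors `w_e`, `e` an edge of `K_{r_1,…,r_n}`, is isomorphic to `ℤ^n`. -/
theorem stmt_0 (n : ℕ) (hn : 1 ≤ n) (r : ℕ → ℕ)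
    (hr1 : ∀ i < n, 1 ≤ r i)
    (hmono : ∀ i j, i ≤ j → j < n → r i ≤ r j)
    (d : ℕ) (hd : d = ∑ i ∈ Finset.range n, r i)
    (blk : Fin d → ℕ) (hblkn : ∀ a, blk a < n)
    (hcard : ∀ i < n, (Finset.univ.filter (fun a : Fin d => blk a = i)).card = r i)
    (hcase : (n = 3 ∧ 2 ≤ r 0) ∨ 4 ≤ n) :
    Nonempty ((((Fin d → ℤ) × (Fin n → ℤ)) ⧸
      AddSubgroup.closure {v | ∃ a b : Fin d, blk a ≠ blk b ∧ v = wvec n d blk a b})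
      ≃+ (Fin n → ℤ)) :=
  stmt_0_general n r hr1 d blk hblkn hcard hcase
end

section
/- Let n ≥ 3 be odd and write V_i = {v_{i,1},…,v_{i,r_i}} for each block. Then the following d vectors in ℤ^{d+n} are linearly independent over ℚ: the vectors w_e for the edges e = {v_{i,j}, v_{i+1,j}} with 1 ≤ i ≤ n−1 and 1 ≤ j ≤ r_1, the edges e = {v_{n,j}, v_{1,j}} with 1 ≤ j ≤ r_1, and the edges e = {v_{1,1}, v_{i,j}} with 2 ≤ i ≤ n and r_1 + 1 ≤ j ≤ r_i. -/
/-- The rational vector `w_e ∈ ℚ^d ⊕ ℚ^n` associated to the edge `e = {a,b}`. -/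
def wvecQ (n d : ℕ) (blk : Fin d → ℕ) (a b : Fin d) : (Fin d → ℚ) × (Fin n → ℚ) :=
  (fun k => (if k = a then 1 else 0) + (if k = b then 1 else 0),
   fun i => if (i : ℕ) = blk a ∨ (i : ℕ) = blk b then 0 else 1)

/-! Only the `ℚ^d` components are needed. The vertex `v i j` with `j ≥ r 0` lies on exactly one
of the chosen edges, namely the star edge `{v 0 0, v i j}`, so all star coefficients vanish.
On the cycle `C_j` the coordinate at `v (i+1) j` reads `λ_{i+1} + λ_i = 0`; the coefficients
therefore alternate in sign around the cycle, and since the cycle is odd they vanish. -/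

open Function

theorem LinearIndependent.sum_elim_of_restrict {R α ι κ : Type*} [Ring R]
    {f : ι → α → R} {g : κ → α → R} (x : κ → α) (hf : LinearIndependent R f)
    (hfx : ∀ i q, f i (x q) = 0) (hg : LinearIndependent R fun q => g q ∘ x) :
    LinearIndependent R (Sum.elim f g) := by
  have hg' : LinearIndependent R (LinearMap.funLeft R R x ∘ g) := hg
  refine hf.sum_type hg'.of_comp ?_
  refine ((Submodule.range_ker_disjoint hg').mono_right ?_).symm
  rw [Submodule.span_le]
  rintro _ ⟨i, rfl⟩
  exact funext (hfx i)

theorem linearIndependent_single_add_single_of_iterate_odd {R α ι : Type*} [Ring R]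
    [IsAddTorsionFree R] [DecidableEq α] {c : ι → α} (hc : Injective c) {s : ι → ι}
    {n : ℕ} (hn : Odd n) (hs : ∀ i, s^[n] i = i) :
    LinearIndependent R fun i => (Pi.single (c i) 1 + Pi.single (c (s i)) 1 : α → R) := by
  have hs_inj : Injective s := by
    obtain ⟨m, rfl⟩ := hn
    exact LeftInverse.injective (g := s^[2 * m]) fun i => by
      rw [← iterate_succ_apply s (2 * m)]; exact hs i
  rw [linearIndependent_iff]
  intro l hl
  have hstep : ∀ i, l (s i) = -l i := fun i => by
    have := congrFun hl (c (s i))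
    classical
    simp only [Finsupp.linearCombination_apply, Finsupp.sum_apply', Pi.smul_apply,
      Pi.add_apply, Pi.single_apply, hc.eq_iff, hs_inj.eq_iff, smul_add, smul_eq_mul, mul_ite,
      mul_one, mul_zero, Finsupp.sum_add, Finsupp.sum_ite_self_eq, Pi.zero_apply] at this
    exact eq_neg_of_add_eq_zero_left this
  have hiter : ∀ k i, l (s^[k] i) = (-1) ^ k * l i := by
    intro k
    induction k with
    | zero => simp
    | succ k ih => intro i; rw [iterate_succ_apply', hstep, ih, pow_succ, mul_neg_one, neg_mul]
  ext i
  have := hiter n i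
  rw [hs, hn.neg_one_pow, neg_one_mul] at this
  exact self_eq_neg.1 this

theorem Pi.single_add_single_comp_eq_single {R α κ : Type*} [Semiring R] [DecidableEq α]
    [DecidableEq κ] {x : κ → α} (hx : Injective x) {c : α} (hc : ∀ q, x q ≠ c) (q : κ) :
    (Pi.single c 1 + Pi.single (x q) 1 : α → R) ∘ x = Pi.single q 1 := by
  ext q'
  simp [Pi.single_apply, hx.eq_iff, hc q']

theorem wvecQ_fst (n d : ℕ) (blk : Fin d → ℕ) (a b : Fin d) :
    (wvecQ n d blk a b).1 = Pi.single a 1 + Pi.single b 1 := by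
  ext k
  simp [wvecQ, Pi.single_apply]

def succMod {n : ℕ} (i : Fin n) : Fin n := ⟨(i + 1) % n, Nat.mod_lt _ i.pos⟩

theorem iterate_succMod {n : ℕ} (k : ℕ) (i : Fin n) :
    (succMod^[k] i : ℕ) = (i + k) % n := by
  induction k with
  | zero => simp [Nat.mod_eq_of_lt i.isLt]
  | succ k ih =>
    rw [iterate_succ_apply']
    show ((_ : ℕ) + 1) % n = _
    rw [ih, Nat.mod_add_mod, add_assoc]

theorem iterate_succMod_self {n : ℕ} (i : Fin n) : succMod^[n] i = i :=
  Fin.ext <| by rw [iterate_succMod, Nat.add_mod_right, Nat.mod_eq_of_lt i.isLt]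

abbrev StarIndex (n : ℕ) (r : ℕ → ℕ) : Type :=
  {p : ℕ × ℕ // 1 ≤ p.1 ∧ p.1 < n ∧ r 0 ≤ p.2 ∧ p.2 < r p.1}

section Vertices

variable {n d : ℕ} {r : ℕ → ℕ} {v : ℕ → ℕ → Fin d}

theorem injective_cycleVertex (hr0 : ∀ i < n, r 0 ≤ r i)
    (hvinj : ∀ i < n, ∀ i' < n, ∀ j < r i, ∀ j' < r i',
      v i j = v i' j' → i = i' ∧ j = j') :
    Injective fun p : Fin n × Fin (r 0) => v p.1 p.2 := by
  rintro ⟨i, j⟩ ⟨i', j'⟩ h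
  obtain ⟨hi, hj⟩ := hvinj i i.isLt i' i'.isLt j (j.isLt.trans_le (hr0 i i.isLt)) j'
    (j'.isLt.trans_le (hr0 i' i'.isLt)) h
  exact Prod.ext (Fin.ext hi) (Fin.ext hj)

theorem starVertex_ne_cycleVertex (hr0 : ∀ i < n, r 0 ≤ r i)
    (hvinj : ∀ i < n, ∀ i' < n, ∀ j < r i, ∀ j' < r i',
      v i j = v i' j' → i = i' ∧ j = j')
    (q : StarIndex n r) {i j : ℕ} (hi : i < n) (hj : j < r 0) :
    v q.1.1 q.1.2 ≠ v i j := by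
  obtain ⟨⟨a, b⟩, _, ha, hb, hb'⟩ := q
  intro h
  have := (hvinj a ha i hi b hb' j (hj.trans_le (hr0 i hi)) h).2
  omega

theorem starVertex_ne_center
    (hvinj : ∀ i < n, ∀ i' < n, ∀ j < r i, ∀ j' < r i',
      v i j = v i' j' → i = i' ∧ j = j')
    (hr1 : 0 < r 0) (q : StarIndex n r) : v q.1.1 q.1.2 ≠ v 0 0 := by
  obtain ⟨⟨a, b⟩, ha0, ha, _, hb'⟩ := q
  intro h
  have := (hvinj a ha 0 (by omega) b hb' 0 hr1 h).1
  omega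

theorem injective_starVertex
    (hvinj : ∀ i < n, ∀ i' < n, ∀ j < r i, ∀ j' < r i',
      v i j = v i' j' → i = i' ∧ j = j') :
    Injective fun q : StarIndex n r => v q.1.1 q.1.2 := by
  rintro ⟨⟨a, b⟩, _, ha, _, hb⟩ ⟨⟨a', b'⟩, _, ha', _, hb'⟩ h
  obtain ⟨rfl, rfl⟩ := hvinj a ha a' ha' b hb b' hb' h
  rfl

end Vertices

-- Indices are 0-based: `v i j` is the `(j+1)`-st vertex of the `(i+1)`-st block.
theorem stmt_1_general (n : ℕ) (hodd : Odd n) (r : ℕ → ℕ)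
    (hr1 : ∀ i < n, 1 ≤ r i)
    (hmono : ∀ i j, i ≤ j → j < n → r i ≤ r j)
    (d : ℕ)
    (blk : Fin d → ℕ)
    (v : ℕ → ℕ → Fin d)
    (hvinj : ∀ i < n, ∀ i' < n, ∀ j < r i, ∀ j' < r i',
      v i j = v i' j' → i = i' ∧ j = j') :
    LinearIndependent ℚ
      (Sum.elim
        (fun p : Fin n × Fin (r 0) =>
          wvecQ n d blk (v (p.1 : ℕ) (p.2 : ℕ)) (v (((p.1 : ℕ) + 1) % n) (p.2 : ℕ)))
        (fun q : {p : ℕ × ℕ // 1 ≤ p.1 ∧ p.1 < n ∧ r 0 ≤ p.2 ∧ p.2 < r p.1} =>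
          wvecQ n d blk (v 0 0) (v q.1.1 q.1.2))) := by
  classical
  have hr0 : ∀ i < n, r 0 ≤ r i := fun i hi => hmono 0 i (Nat.zero_le _) hi
  have hcycle : LinearIndependent ℚ fun p : Fin n × Fin (r 0) =>
      (Pi.single (v p.1 p.2) 1 + Pi.single (v (Prod.map succMod id p).1 p.2) 1 : Fin d → ℚ) :=
    linearIndependent_single_add_single_of_iterate_odd (injective_cycleVertex hr0 hvinj) hodd
      fun p => by rw [Prod.map_iterate, iterate_id, Prod.map_apply, iterate_succMod_self, id]
  refine LinearIndependent.of_comp (LinearMap.fst ℚ _ _) ?_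
  rw [Sum.comp_elim]
  simp only [comp_def, LinearMap.fst_apply, wvecQ_fst]
  refine hcycle.sum_elim_of_restrict (fun q => v q.1.1 q.1.2) ?_ ?_
  · rintro ⟨i, j⟩ q
    rw [Pi.add_apply, Pi.single_eq_of_ne (starVertex_ne_cycleVertex hr0 hvinj q i.isLt j.isLt),
      Pi.single_eq_of_ne (starVertex_ne_cycleVertex hr0 hvinj q (Nat.mod_lt _ i.pos) j.isLt),
      add_zero]
  · simp only [Pi.single_add_single_comp_eq_single (injective_starVertex hvinj)
      (starVertex_ne_center hvinj (hr1 0 hodd.pos))]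
    exact Pi.linearIndependent_single_one _ ℚ

/-- For odd `n ≥ 3`, the `d` vectors `w_e` for the edges
`{v_{i,j}, v_{i+1 mod n, j}}` (`0 ≤ i < n`, `0 ≤ j < r 0`, i.e. the cycles `C_j`), together
with the edges `{v_{0,0}, v_{i,j}}` (`1 ≤ i < n`, `r 0 ≤ j < r i`), are linearly
independent over `ℚ`. (Here indices are 0-based: `v i j` is the `(j+1)`-st vertex of the
`(i+1)`-st block.) -/
theorem stmt_1 (n : ℕ) (hn3 : 3 ≤ n) (hodd : Odd n) (r : ℕ → ℕ)
    (hr1 : ∀ i < n, 1 ≤ r i)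
    (hmono : ∀ i j, i ≤ j → j < n → r i ≤ r j)
    (d : ℕ) (hd : d = ∑ i ∈ Finset.range n, r i)
    (blk : Fin d → ℕ) (hblkn : ∀ a, blk a < n)
    (hcard : ∀ i < n, (Finset.univ.filter (fun a : Fin d => blk a = i)).card = r i)
    (v : ℕ → ℕ → Fin d)
    (hvblk : ∀ i < n, ∀ j < r i, blk (v i j) = i)
    (hvinj : ∀ i < n, ∀ i' < n, ∀ j < r i, ∀ j' < r i',
      v i j = v i' j' → i = i' ∧ j = j') :
    LinearIndependent ℚ
      (Sum.elim
        (fun p : Fin n × Fin (r 0) =>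
          wvecQ n d blk (v (p.1 : ℕ) (p.2 : ℕ)) (v (((p.1 : ℕ) + 1) % n) (p.2 : ℕ)))
        (fun q : {p : ℕ × ℕ // 1 ≤ p.1 ∧ p.1 < n ∧ r 0 ≤ p.2 ∧ p.2 < r p.1} =>
          wvecQ n d blk (v 0 0) (v q.1.1 q.1.2))) :=
  stmt_1_general n hodd r hr1 hmono d blk v hvinj
end

section
/- Let C: u_1,…,u_{2k+1} and C': u'_1,…,u'_{2k'+1} be two odd cycles in K_{r_1,…,r_n} whose vertex sets intersect exactly in the single common vertex u_1 = u'_1, with edges e_i = {u_i, u_{i+1}} (u_{2k+2} := u_1) and e'_i = {u'_i, u'_{i+1}} (u'_{2k'+2} := u'_1). Then Σ_{i=1}^{2k+1} (−1)^i w_{e_i} − Σ_{i=1}^{2k'+1} (−1)^i w_{e'_i} = 0 in ℤ^{d+n}; in particular, the vectors w_{e_1},…,w_{e_{2k+1}}, w_{e'_1},…,w_{e'_{2k'+1}} are linearly dependent. -/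
open Finset

section AlternatingSum

variable {R M : Type*} [CommRing R] [AddCommGroup M] [Module R M]

theorem sum_range_neg_one_pow_smul_add_succ (f : ℕ → M) (l : ℕ) :
    ∑ i ∈ range l, (-1 : R) ^ (i + 1) • (f i + f (i + 1)) = (-1 : R) ^ l • f l - f 0 := by
  induction l with
  | zero => simp
  | succ l ih => rw [sum_range_succ, ih, pow_succ]; module

theorem sum_range_odd_neg_one_pow_smul_add_mod (f : ℕ → M) (k : ℕ) :
    ∑ i ∈ range (2 * k + 1), (-1 : R) ^ (i + 1) • (f i + f ((i + 1) % (2 * k + 1))) =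
      -(2 : R) • f 0 := by
  have h :=
    sum_range_neg_one_pow_smul_add_succ (R := R) (fun j => f (j % (2 * k + 1))) (2 * k + 1)
  rw [Nat.mod_self, Nat.zero_mod, pow_succ, pow_mul, neg_one_sq, one_pow, one_mul] at h
  calc _ = ∑ i ∈ range (2 * k + 1),
        (-1 : R) ^ (i + 1) • (f (i % (2 * k + 1)) + f ((i + 1) % (2 * k + 1))) :=
        sum_congr rfl fun i hi => by rw [Nat.mod_eq_of_lt (mem_range.1 hi)]
    _ = -(2 : R) • f 0 := by rw [h]; module

theorem sum_range_odd_neg_one_pow_smul (c : M) (k : ℕ) :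
    ∑ i ∈ range (2 * k + 1), (-1 : R) ^ (i + 1) • c = -c := by
  simp_rw [← sum_smul, pow_succ, ← sum_mul, neg_one_geom_sum, Nat.not_even_bit1]
  simp

theorem sum_range_odd_neg_one_pow_smul_const_add_add_mod (c : M) (f : ℕ → M) (k : ℕ) :
    ∑ i ∈ range (2 * k + 1), (-1 : R) ^ (i + 1) • (c + (f i + f ((i + 1) % (2 * k + 1)))) =
      -(c + (2 : R) • f 0) := by
  simp_rw [smul_add (b₁ := c), sum_add_distrib, sum_range_odd_neg_one_pow_smul,
    sum_range_odd_neg_one_pow_smul_add_mod]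
  module

end AlternatingSum

section EdgeVectors

variable (R : Type*) [CommRing R] (n d : ℕ) (blk : Fin d → ℕ)

def wvecR (a b : Fin d) : (Fin d → R) × (Fin n → R) :=
  (fun k => (if k = a then 1 else 0) + (if k = b then 1 else 0),
   fun i => if (i : ℕ) = blk a ∨ (i : ℕ) = blk b then 0 else 1)

theorem wvec_eq_wvecR : wvec n d blk = wvecR ℤ n d blk := rfl

theorem wvecQ_eq_wvecR : wvecQ n d blk = wvecR ℚ n d blk := rfl

def vertexVec (a : Fin d) : (Fin d → R) × (Fin n → R) :=
  (Pi.single a 1, fun i => if (i : ℕ) = blk a then -1 else 0)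

variable {R n d blk}

theorem wvecR_eq_of_blk_ne {a b : Fin d} (h : blk a ≠ blk b) :
    wvecR R n d blk a b = (0, 1) + (vertexVec R n d blk a + vertexVec R n d blk b) := by
  ext i
  · simp [wvecR, vertexVec, Pi.single_apply]
  · simp only [wvecR, vertexVec, Prod.snd_add, Pi.add_apply, Pi.one_apply]
    split_ifs <;> simp_all

theorem sum_range_odd_neg_one_pow_smul_wvecR (k : ℕ) (u : ℕ → Fin d)
    (hcyc : ∀ i < 2 * k + 1, blk (u i) ≠ blk (u ((i + 1) % (2 * k + 1)))) :
    ∑ i ∈ range (2 * k + 1),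
        (-1 : R) ^ (i + 1) • wvecR R n d blk (u i) (u ((i + 1) % (2 * k + 1))) =
      -((0, 1) + (2 : R) • vertexVec R n d blk (u 0)) := by
  rw [sum_congr rfl fun i hi => by rw [wvecR_eq_of_blk_ne (hcyc i (mem_range.1 hi))]]
  exact sum_range_odd_neg_one_pow_smul_const_add_add_mod _ (fun i => vertexVec R n d blk (u i)) k

end EdgeVectors

theorem not_linearIndependent_sum_elim_of_sum_smul_eq {R M ι ι' : Type*} [Ring R]
    [AddCommGroup M] [Module R M] [Fintype ι] [Fintype ι'] {v : ι → M} {v' : ι' → M}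
    (a : ι → R) (b : ι' → R) (h : ∑ i, a i • v i = ∑ j, b j • v' j) {i₀ : ι} (ha : a i₀ ≠ 0) :
    ¬ LinearIndependent R (Sum.elim v v') := by
  rw [Fintype.not_linearIndependent_iff]
  refine ⟨Sum.elim a (-b), ?_, Sum.inl i₀, ha⟩
  simp [Fintype.sum_sum_type, h]

theorem stmt_3_general (n : ℕ) (d : ℕ) (blk : Fin d → ℕ) (k k' : ℕ) (u u' : ℕ → Fin d)
    (hucyc : ∀ i < 2 * k + 1, blk (u i) ≠ blk (u ((i + 1) % (2 * k + 1))))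
    (hu'cyc : ∀ i < 2 * k' + 1, blk (u' i) ≠ blk (u' ((i + 1) % (2 * k' + 1))))
    (hcommon : u 0 = u' 0) :
    (∑ i ∈ Finset.range (2 * k + 1),
        ((-1 : ℤ) ^ (i + 1)) • wvec n d blk (u i) (u ((i + 1) % (2 * k + 1)))
      - ∑ i ∈ Finset.range (2 * k' + 1),
        ((-1 : ℤ) ^ (i + 1)) • wvec n d blk (u' i) (u' ((i + 1) % (2 * k' + 1))) = 0) ∧
    ¬ LinearIndependent ℚ
      (Sum.elim
        (fun i : Fin (2 * k + 1) =>
          wvecQ n d blk (u (i : ℕ)) (u (((i : ℕ) + 1) % (2 * k + 1))))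
        (fun i : Fin (2 * k' + 1) =>
          wvecQ n d blk (u' (i : ℕ)) (u' (((i : ℕ) + 1) % (2 * k' + 1))))) := by
  constructor
  · rw [wvec_eq_wvecR, sub_eq_zero]
    exact (sum_range_odd_neg_one_pow_smul_wvecR k u hucyc).trans
      (hcommon ▸ (sum_range_odd_neg_one_pow_smul_wvecR k' u' hu'cyc).symm)
  · refine not_linearIndependent_sum_elim_of_sum_smul_eq (fun i => (-1 : ℚ) ^ ((i : ℕ) + 1))
      (fun j => (-1 : ℚ) ^ ((j : ℕ) + 1)) ?_ (i₀ := 0) (by simp)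
    rw [wvecQ_eq_wvecR, Fin.sum_univ_eq_sum_range
        (fun j => (-1 : ℚ) ^ (j + 1) • wvecR ℚ n d blk (u j) (u ((j + 1) % (2 * k + 1)))),
      Fin.sum_univ_eq_sum_range
        (fun j => (-1 : ℚ) ^ (j + 1) • wvecR ℚ n d blk (u' j) (u' ((j + 1) % (2 * k' + 1)))),
      sum_range_odd_neg_one_pow_smul_wvecR k u hucyc,
      sum_range_odd_neg_one_pow_smul_wvecR k' u' hu'cyc, hcommon]

/-- For two odd cycles `C : u_0,…,u_{2k}` and `C' : u'_0,…,u'_{2k'}` of `K_{r_1,…,r_n}`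
meeting exactly in the single common vertex `u_0 = u'_0`, we have
`Σ_{i=1}^{2k+1} (-1)^i w_{e_i} - Σ_{i=1}^{2k'+1} (-1)^i w_{e'_i} = 0`; in particular the
vectors `w_{e_1},…,w_{e_{2k+1}}, w_{e'_1},…,w_{e'_{2k'+1}}` are linearly dependent. -/
theorem stmt_3 (n : ℕ) (hn : 1 ≤ n) (r : ℕ → ℕ)
    (hr1 : ∀ i < n, 1 ≤ r i)
    (hmono : ∀ i j, i ≤ j → j < n → r i ≤ r j)
    (d : ℕ) (hd : d = ∑ i ∈ Finset.range n, r i)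
    (blk : Fin d → ℕ) (hblkn : ∀ a, blk a < n)
    (hcard : ∀ i < n, (Finset.univ.filter (fun a : Fin d => blk a = i)).card = r i)
    (k k' : ℕ) (hk : 1 ≤ k) (hk' : 1 ≤ k') (u u' : ℕ → Fin d)
    (huinj : ∀ i < 2 * k + 1, ∀ j < 2 * k + 1, u i = u j → i = j)
    (hucyc : ∀ i < 2 * k + 1, blk (u i) ≠ blk (u ((i + 1) % (2 * k + 1))))
    (hu'inj : ∀ i < 2 * k' + 1, ∀ j < 2 * k' + 1, u' i = u' j → i = j)
    (hu'cyc : ∀ i < 2 * k' + 1, blk (u' i) ≠ blk (u' ((i + 1) % (2 * k' + 1))))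
    (hcommon : u 0 = u' 0)
    (hmeet : ∀ i < 2 * k + 1, ∀ j < 2 * k' + 1, u i = u' j → i = 0 ∧ j = 0) :
    (∑ i ∈ Finset.range (2 * k + 1),
        ((-1 : ℤ) ^ (i + 1)) • wvec n d blk (u i) (u ((i + 1) % (2 * k + 1)))
      - ∑ i ∈ Finset.range (2 * k' + 1),
        ((-1 : ℤ) ^ (i + 1)) • wvec n d blk (u' i) (u' ((i + 1) % (2 * k' + 1))) = 0) ∧
    ¬ LinearIndependent ℚ
      (Sum.elim
        (fun i : Fin (2 * k + 1) =>
          wvecQ n d blk (u (i : ℕ)) (u (((i : ℕ) + 1) % (2 * k + 1))))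
        (fun i : Fin (2 * k' + 1) =>
          wvecQ n d blk (u' (i : ℕ)) (u' (((i : ℕ) + 1) % (2 * k' + 1))))) :=
  stmt_3_general n d blk k k' u u' hucyc hu'cyc hcommon
end

section
/- Let C: u_1,…,u_{2k+1} and C': u'_1,…,u'_{2k'+1} be two vertex-disjoint odd cycles in K_{r_1,…,r_n}, with edges e_i = {u_i, u_{i+1}} (u_{2k+2} := u_1) and e'_i = {u'_i, u'_{i+1}} (u'_{2k'+2} := u'_1), and let q_0 = u_1, q_1, …, q_m = u'_1 be a path in K_{r_1,…,r_n} connecting them (pairwise distinct vertices, consecutive vertices in different blocks, and q_1,…,q_{m−1} lying on neither cycle), with edges f_j = {q_{j−1}, q_j} for j = 1,…,m. Then in ℤ^{d+n}: if m is even, Σ_{i=1}^{2k+1} (−1)^i w_{e_i} − Σ_{i=1}^{2k'+1} (−1)^i w_{e'_i} − 2 Σ_{j=1}^{m} (−1)^j w_{f_j} = 0, and if m is odd, Σ_{i=1}^{2k+1} (−1)^i w_{e_i} + Σ_{i=1}^{2k'+1} (−1)^i w_{e'_i} − 2 Σ_{j=1}^{m} (−1)^j w_{f_j} = 0; in particular,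 the vectors w_{e_i}, w_{e'_i}, w_{f_j} are linearly dependent. -/
open Finset

section Telescope

variable {R M : Type*} [Ring R] [AddCommGroup M] [Module R M]

theorem sum_range_neg_one_pow_smul_add_add (G : ℕ → M) (c : M) (m : ℕ) :
    ∑ j ∈ range m, (-1 : R) ^ (j + 1) • (G j + G (j + 1) + c)
      = (-1 : R) ^ m • G m - G 0 - if Even m then 0 else c := by
  induction m with
  | zero => simp
  | succ m ih =>
    rw [sum_range_succ, ih]
    rcases Nat.even_or_odd m with hm | hm
    · simp [hm, hm.neg_one_pow, pow_succ, Nat.even_add_one]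
      abel
    · simp [hm, hm.neg_one_pow, pow_succ, Nat.not_even_iff_odd.mpr hm]
      abel

end Telescope

section EdgeVectors

variable (R : Type*) [Ring R] (n : ℕ) {d : ℕ} (blk : Fin d → ℕ)

def edgeVector (a b : Fin d) : (Fin d → R) × (Fin n → R) :=
  (fun k => (if k = a then 1 else 0) + (if k = b then 1 else 0),
   fun i => if (i : ℕ) = blk a ∨ (i : ℕ) = blk b then 0 else 1)

def vertexVector (a : Fin d) : (Fin d → R) × (Fin n → R) :=
  (fun k => if k = a then 1 else 0, fun i => if (i : ℕ) = blk a then -1 else 0)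

def blockOnes : (Fin d → R) × (Fin n → R) :=
  (0, fun _ => 1)

def altPathSum (m : ℕ) (q : ℕ → Fin d) : (Fin d → R) × (Fin n → R) :=
  ∑ j ∈ range m, (-1 : R) ^ (j + 1) • edgeVector R n blk (q j) (q (j + 1))

def altCycleSum (k : ℕ) (u : ℕ → Fin d) : (Fin d → R) × (Fin n → R) :=
  ∑ i ∈ range (2 * k + 1),
    (-1 : R) ^ (i + 1) • edgeVector R n blk (u i) (u ((i + 1) % (2 * k + 1)))

variable {R n blk}

theorem edgeVector_eq_add {a b : Fin d} (h : blk a ≠ blk b) :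
    edgeVector R n blk a b
      = vertexVector R n blk a + vertexVector R n blk b + blockOnes R n := by
  refine Prod.ext (funext fun k => by simp [edgeVector, vertexVector, blockOnes])
    (funext fun i => ?_)
  by_cases ha : (i : ℕ) = blk a
  · simp [edgeVector, vertexVector, blockOnes, ha, h]
  · by_cases hb : (i : ℕ) = blk b <;>
      simp [edgeVector, vertexVector, blockOnes, ha, hb, Ne.symm h]

theorem altPathSum_eq (m : ℕ) (q : ℕ → Fin d)
    (hq : ∀ j < m, blk (q j) ≠ blk (q (j + 1))) :
    altPathSum R n blk m q
      = (-1 : R) ^ m • vertexVector R n blk (q m) - vertexVector R n blk (q 0)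
        - if Even m then 0 else blockOnes R n := by
  rw [altPathSum, ← sum_range_neg_one_pow_smul_add_add (fun j => vertexVector R n blk (q j))]
  exact sum_congr rfl fun j hj => by rw [edgeVector_eq_add (hq j (mem_range.mp hj))]

theorem altCycleSum_eq (k : ℕ) (u : ℕ → Fin d)
    (hu : ∀ i < 2 * k + 1, blk (u i) ≠ blk (u ((i + 1) % (2 * k + 1)))) :
    altCycleSum R n blk k u = -(2 : R) • vertexVector R n blk (u 0) - blockOnes R n := by
  have hclose : (2 * k + 1) % (2 * k + 1) = 0 := Nat.mod_self _
  have hpath : ∀ i < 2 * k, blk (u i) ≠ blk (u (i + 1)) := fun i hi => by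
    simpa [Nat.mod_eq_of_lt (show i + 1 < 2 * k + 1 by omega)] using hu i (by omega)
  have hlast : blk (u (2 * k)) ≠ blk (u 0) := by simpa [hclose] using hu (2 * k) (by omega)
  have hinit : ∑ i ∈ range (2 * k), (-1 : R) ^ (i + 1) •
      edgeVector R n blk (u i) (u ((i + 1) % (2 * k + 1))) = altPathSum R n blk (2 * k) u :=
    sum_congr rfl fun i hi => by rw [Nat.mod_eq_of_lt (by simp at hi; omega)]
  have heven : Even (2 * k) := even_two_mul k
  rw [altCycleSum, sum_range_succ, hclose, hinit, edgeVector_eq_add hlast,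
    altPathSum_eq (2 * k) u hpath]
  simp [heven, heven.neg_one_pow, pow_succ, two_smul]
  abel

theorem altCycleSum_add_altCycleSum_sub_altPathSum (k k' m : ℕ) (u u' q : ℕ → Fin d)
    (hu : ∀ i < 2 * k + 1, blk (u i) ≠ blk (u ((i + 1) % (2 * k + 1))))
    (hu' : ∀ i < 2 * k' + 1, blk (u' i) ≠ blk (u' ((i + 1) % (2 * k' + 1))))
    (hq0 : q 0 = u 0) (hqm : q m = u' 0) (hq : ∀ j < m, blk (q j) ≠ blk (q (j + 1))) :
    altCycleSum R n blk k u + (-1 : R) ^ (m + 1) • altCycleSum R n blk k' u'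
      - 2 • altPathSum R n blk m q = 0 := by
  rw [altCycleSum_eq k u hu, altCycleSum_eq k' u' hu', altPathSum_eq m q hq, hq0, hqm]
  rcases Nat.even_or_odd m with hm | hm
  · simp [hm, hm.neg_one_pow, pow_succ, two_smul]
    abel
  · simp [hm.neg_one_pow, pow_succ, two_smul, Nat.not_even_iff_odd.mpr hm]
    abel

theorem wvec_eq_edgeVector : wvec n d blk = edgeVector ℤ n blk := rfl

theorem wvecQ_eq_edgeVector : wvecQ n d blk = edgeVector ℚ n blk := rfl

end EdgeVectors

theorem stmt_4_general (n : ℕ) (d : ℕ)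
    (blk : Fin d → ℕ)
    (k k' m : ℕ)
    (u u' q : ℕ → Fin d)
    (hucyc : ∀ i < 2 * k + 1, blk (u i) ≠ blk (u ((i + 1) % (2 * k + 1))))
    (hu'cyc : ∀ i < 2 * k' + 1, blk (u' i) ≠ blk (u' ((i + 1) % (2 * k' + 1))))
    (hq0 : q 0 = u 0) (hqm : q m = u' 0)
    (hqpath : ∀ j < m, blk (q j) ≠ blk (q (j + 1))) :
    ((Even m →
      ∑ i ∈ Finset.range (2 * k + 1),
          ((-1 : ℤ) ^ (i + 1)) • wvec n d blk (u i) (u ((i + 1) % (2 * k + 1)))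
        - ∑ i ∈ Finset.range (2 * k' + 1),
          ((-1 : ℤ) ^ (i + 1)) • wvec n d blk (u' i) (u' ((i + 1) % (2 * k' + 1)))
        - 2 • ∑ j ∈ Finset.range m,
          ((-1 : ℤ) ^ (j + 1)) • wvec n d blk (q j) (q (j + 1)) = 0) ∧
     (Odd m →
      ∑ i ∈ Finset.range (2 * k + 1),
          ((-1 : ℤ) ^ (i + 1)) • wvec n d blk (u i) (u ((i + 1) % (2 * k + 1)))
        + ∑ i ∈ Finset.range (2 * k' + 1),
          ((-1 : ℤ) ^ (i + 1)) • wvec n d blk (u' i) (u' ((i + 1) % (2 * k' + 1)))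
        - 2 • ∑ j ∈ Finset.range m,
          ((-1 : ℤ) ^ (j + 1)) • wvec n d blk (q j) (q (j + 1)) = 0)) ∧
    ¬ LinearIndependent ℚ
      (Sum.elim
        (Sum.elim
          (fun i : Fin (2 * k + 1) =>
            wvecQ n d blk (u (i : ℕ)) (u (((i : ℕ) + 1) % (2 * k + 1))))
          (fun i : Fin (2 * k' + 1) =>
            wvecQ n d blk (u' (i : ℕ)) (u' (((i : ℕ) + 1) % (2 * k' + 1)))))
        (fun j : Fin m => wvecQ n d blk (q (j : ℕ)) (q ((j : ℕ) + 1)))) := by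
  have relZ := altCycleSum_add_altCycleSum_sub_altPathSum (R := ℤ) (n := n) k k' m u u' q
    hucyc hu'cyc hq0 hqm hqpath
  have relQ := altCycleSum_add_altCycleSum_sub_altPathSum (R := ℚ) (n := n) k k' m u u' q
    hucyc hu'cyc hq0 hqm hqpath
  rw [wvec_eq_edgeVector, wvecQ_eq_edgeVector]
  refine ⟨⟨fun hm => ?_, fun hm => ?_⟩, ?_⟩
  · rwa [pow_succ, hm.neg_one_pow, one_mul, neg_one_smul, ← sub_eq_add_neg] at relZ
  · rwa [pow_succ, hm.neg_one_pow, neg_one_mul, neg_neg, one_smul] at relZ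
  · rw [Fintype.not_linearIndependent_iff]
    refine ⟨Sum.elim (Sum.elim (fun i => (-1 : ℚ) ^ ((i : ℕ) + 1))
        (fun i => (-1 : ℚ) ^ (m + 1) * (-1) ^ ((i : ℕ) + 1)))
        (fun j => -2 * (-1 : ℚ) ^ ((j : ℕ) + 1)), ?_, Sum.inl (Sum.inl 0), by simp⟩
    simp only [Fintype.sum_sum_type, Sum.elim_inl, Sum.elim_inr, mul_smul, ← smul_sum,
      Fin.sum_univ_eq_sum_range (fun i => (-1 : ℚ) ^ (i + 1) •
        edgeVector ℚ n blk (u i) (u ((i + 1) % (2 * k + 1)))),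
      Fin.sum_univ_eq_sum_range (fun i => (-1 : ℚ) ^ (i + 1) •
        edgeVector ℚ n blk (u' i) (u' ((i + 1) % (2 * k' + 1)))),
      Fin.sum_univ_eq_sum_range (fun j => (-1 : ℚ) ^ (j + 1) •
        edgeVector ℚ n blk (q j) (q (j + 1)))]
    rw [altCycleSum, altCycleSum, altPathSum] at relQ
    rw [← relQ]
    module

/-- Two vertex-disjoint odd cycles `C : u_0,…,u_{2k}` and `C' : u'_0,…,u'_{2k'}` in
`K_{r_1,…,r_n}` joined by a path `q_0 = u_0, q_1, …, q_m = u'_0` whose interior vertices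
lie on neither cycle satisfy: if `m` is even then
`Σ(-1)^i w_{e_i} - Σ(-1)^i w_{e'_i} - 2Σ(-1)^j w_{f_j} = 0`, and if `m` is odd then
`Σ(-1)^i w_{e_i} + Σ(-1)^i w_{e'_i} - 2Σ(-1)^j w_{f_j} = 0`; in particular the vectors
`w_{e_i}, w_{e'_i}, w_{f_j}` are linearly dependent. -/
theorem stmt_4 (n : ℕ) (hn : 1 ≤ n) (r : ℕ → ℕ)
    (hr1 : ∀ i < n, 1 ≤ r i)
    (hmono : ∀ i j, i ≤ j → j < n → r i ≤ r j)
    (d : ℕ) (hd : d = ∑ i ∈ Finset.range n, r i)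
    (blk : Fin d → ℕ) (hblkn : ∀ a, blk a < n)
    (hcard : ∀ i < n, (Finset.univ.filter (fun a : Fin d => blk a = i)).card = r i)
    (k k' m : ℕ) (hk : 1 ≤ k) (hk' : 1 ≤ k') (hm : 1 ≤ m)
    (u u' q : ℕ → Fin d)
    (huinj : ∀ i < 2 * k + 1, ∀ j < 2 * k + 1, u i = u j → i = j)
    (hucyc : ∀ i < 2 * k + 1, blk (u i) ≠ blk (u ((i + 1) % (2 * k + 1))))
    (hu'inj : ∀ i < 2 * k' + 1, ∀ j < 2 * k' + 1, u' i = u' j → i = j)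
    (hu'cyc : ∀ i < 2 * k' + 1, blk (u' i) ≠ blk (u' ((i + 1) % (2 * k' + 1))))
    (hdisj : ∀ i < 2 * k + 1, ∀ j < 2 * k' + 1, u i ≠ u' j)
    (hq0 : q 0 = u 0) (hqm : q m = u' 0)
    (hqinj : ∀ i ≤ m, ∀ j ≤ m, q i = q j → i = j)
    (hqpath : ∀ j < m, blk (q j) ≠ blk (q (j + 1)))
    (hqint : ∀ j, 0 < j → j < m →
      (∀ i < 2 * k + 1, q j ≠ u i) ∧ (∀ i < 2 * k' + 1, q j ≠ u' i)) :
    ((Even m →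
      ∑ i ∈ Finset.range (2 * k + 1),
          ((-1 : ℤ) ^ (i + 1)) • wvec n d blk (u i) (u ((i + 1) % (2 * k + 1)))
        - ∑ i ∈ Finset.range (2 * k' + 1),
          ((-1 : ℤ) ^ (i + 1)) • wvec n d blk (u' i) (u' ((i + 1) % (2 * k' + 1)))
        - 2 • ∑ j ∈ Finset.range m,
          ((-1 : ℤ) ^ (j + 1)) • wvec n d blk (q j) (q (j + 1)) = 0) ∧
     (Odd m →
      ∑ i ∈ Finset.range (2 * k + 1),
          ((-1 : ℤ) ^ (i + 1)) • wvec n d blk (u i) (u ((i + 1) % (2 * k + 1)))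
        + ∑ i ∈ Finset.range (2 * k' + 1),
          ((-1 : ℤ) ^ (i + 1)) • wvec n d blk (u' i) (u' ((i + 1) % (2 * k' + 1)))
        - 2 • ∑ j ∈ Finset.range m,
          ((-1 : ℤ) ^ (j + 1)) • wvec n d blk (q j) (q (j + 1)) = 0)) ∧
    ¬ LinearIndependent ℚ
      (Sum.elim
        (Sum.elim
          (fun i : Fin (2 * k + 1) =>
            wvecQ n d blk (u (i : ℕ)) (u (((i : ℕ) + 1) % (2 * k + 1))))
          (fun i : Fin (2 * k' + 1) =>
            wvecQ n d blk (u' (i : ℕ)) (u' (((i : ℕ) + 1) % (2 * k' + 1)))))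
        (fun j : Fin m => wvecQ n d blk (q (j : ℕ)) (q ((j : ℕ) + 1)))) :=
  stmt_4_general n d blk k k' m u u' q hucyc hu'cyc hq0 hqm hqpath
end

section
/- Let m, n ≥ 1 and let P ⊆ ℝ^{m+n+2} be the convex hull of the vectors e_a + e_b for 1 ≤ a ≤ m+1 and m+2 ≤ b ≤ m+n+2 (the edge polytope of the complete bipartite graph K_{m+1,n+1}). Let π : ℝ^{m+n+2} → ℝ^{m+n} be the projection deleting the (m+1)-st and (m+n+2)-nd coordinates, and let Q = {x ∈ ℝ^{m+n} : x_k ≥ 0 for all k, Σ_{k=1}^{m} x_k ≤ 1, Σ_{k=m+1}^{m+n} x_k ≤ 1} (the chain polytope of the poset Π_{m,n}). Then π restricted to P is injective, π(P) = Q, and π maps P ∩ ℤ^{m+n+2} bijectively onto Q ∩ ℤ^{m+n}. -/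
/-!
The edge polytope of `K_{m+1,n+1}` is the product of two standard simplices,
`{x ≥ 0 | ∑_{a ≤ m} x a = 1, ∑_{b > m} x b = 1}`: such an `x` is the center of mass of the
vertices `e_a + e_b` with weights `x a * x b`. Deleting one coordinate from each side loses
nothing, because it is `1` minus the sum of the remaining coordinates of its side; this inverse
is affine with integer coefficients, so it also matches up the lattice points.
-/

open Finset

/-- The projection `ℝ^{m+n+2} → ℝ^{m+n}` deleting the `(m+1)`-st and `(m+n+2)`-nd
coordinates (0-based: coordinates `m` and `m+n+1`). -/
def proj (m n : ℕ) (x : Fin (m + n + 2) → ℝ) : Fin (m + n) → ℝ :=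
  fun k => if (k : ℕ) < m then x ⟨(k : ℕ), by have := k.2; omega⟩
           else x ⟨(k : ℕ) + 1, by have := k.2; omega⟩

/-- The edge polytope of the complete bipartite graph `K_{m+1,n+1}`:
the convex hull of `e_a + e_b` for `a` in the first part (0-based indices `0,…,m`) and
`b` in the second part (0-based indices `m+1,…,m+n+1`). -/
noncomputable def edgePolytopeBip (m n : ℕ) : Set (Fin (m + n + 2) → ℝ) :=
  convexHull ℝ {x | ∃ a b : Fin (m + n + 2), (a : ℕ) < m + 1 ∧ m + 1 ≤ (b : ℕ) ∧
    x = fun k => (if k = a then 1 else 0) + (if k = b then 1 else 0)}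

/-- The chain polytope of the poset `Π_{m,n}`. -/
def chainPolytope (m n : ℕ) : Set (Fin (m + n) → ℝ) :=
  {x | (∀ k, 0 ≤ x k) ∧
    (∑ k ∈ univ.filter (fun k : Fin (m + n) => (k : ℕ) < m), x k ≤ 1) ∧
    (∑ k ∈ univ.filter (fun k : Fin (m + n) => m ≤ (k : ℕ)), x k ≤ 1)}

/-- The lattice points of a real coordinate space. -/
def latticePts (N : ℕ) : Set (Fin N → ℝ) := {x | ∀ k, ∃ z : ℤ, x k = (z : ℝ)}

theorem sum_product_smul_single_add_single {ι : Type*} [DecidableEq ι] (x : ι → ℝ)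
    (s t : Finset ι) :
    ∑ ab ∈ s ×ˢ t, (x ab.1 * x ab.2) • (Pi.single ab.1 1 + Pi.single ab.2 1 : ι → ℝ) =
      (∑ b ∈ t, x b) • ∑ a ∈ s, x a • Pi.single a 1 +
        (∑ a ∈ s, x a) • ∑ b ∈ t, x b • Pi.single b 1 := by
  rw [smul_sum, smul_sum]
  simp only [smul_add, sum_add_distrib, ← mul_smul]
  rw [sum_product, sum_product_right]
  simp only [mul_sum, sum_smul, mul_comm]

section SimplexProd

variable {ι : Type*} [Fintype ι]

def simplexProd (p : ι → Prop) [DecidablePred p] : Set (ι → ℝ) :=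
  {x | (∀ i, 0 ≤ x i) ∧ ∑ i ∈ univ.filter p, x i = 1 ∧
    ∑ i ∈ univ.filter (fun i => ¬ p i), x i = 1}

variable (p : ι → Prop) [DecidablePred p]

theorem convex_simplexProd : Convex ℝ (simplexProd p) := by
  rintro x ⟨hx₀, hxp, hxq⟩ y ⟨hy₀, hyp, hyq⟩ a b ha hb hab
  refine ⟨fun i => ?_, ?_, ?_⟩
  · have := hx₀ i; have := hy₀ i
    simp only [Pi.add_apply, Pi.smul_apply, smul_eq_mul]
    positivity
  all_goals simp only [Pi.add_apply, Pi.smul_apply, smul_eq_mul, sum_add_distrib, ← mul_sum,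
    hxp, hxq, hyp, hyq, mul_one, hab]

variable [DecidableEq ι]

theorem sum_filter_smul_single_add_sum_filter_not (x : ι → ℝ) :
    ∑ a ∈ univ.filter p, x a • (Pi.single a 1 : ι → ℝ) +
      ∑ b ∈ univ.filter (fun i => ¬ p i), x b • Pi.single b 1 = x := by
  rw [sum_filter_add_sum_filter_not]
  simp only [← Pi.single_smul', smul_eq_mul, mul_one, univ_sum_single]

theorem single_add_single_mem_simplexProd {a b : ι} (ha : p a) (hb : ¬ p b) :
    (Pi.single a 1 + Pi.single b 1 : ι → ℝ) ∈ simplexProd p := by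
  refine ⟨fun i => ?_, ?_, ?_⟩
  · simp only [Pi.add_apply, Pi.single_apply]
    positivity
  all_goals simp [sum_add_distrib, ha, hb]

theorem convexHull_single_add_single_eq_simplexProd :
    convexHull ℝ {v | ∃ a b, p a ∧ ¬ p b ∧ v = Pi.single a 1 + Pi.single b 1} =
      simplexProd p := by
  refine (convexHull_min ?_ (convex_simplexProd p)).antisymm fun x hx => ?_
  · rintro _ ⟨a, b, ha, hb, rfl⟩
    exact single_add_single_mem_simplexProd p ha hb
  obtain ⟨hx₀, hxp, hxq⟩ := hx
  set s := univ.filter p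
  set t := univ.filter (fun i => ¬ p i)
  have hw : ∑ ab ∈ s ×ˢ t, x ab.1 * x ab.2 = 1 := by
    rw [sum_product, ← sum_mul_sum, hxp, hxq, one_mul]
  have hx : x = (s ×ˢ t).centerMass (fun ab => x ab.1 * x ab.2)
      fun ab => (Pi.single ab.1 1 + Pi.single ab.2 1 : ι → ℝ) := by
    rw [centerMass_eq_of_sum_1 _ _ hw, sum_product_smul_single_add_single, hxp, hxq, one_smul,
      one_smul, sum_filter_smul_single_add_sum_filter_not]
  rw [hx]
  refine (s ×ˢ t).centerMass_mem_convexHull (fun ab _ => mul_nonneg (hx₀ ab.1) (hx₀ ab.2))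
    (hw ▸ one_pos) fun ab hab => ?_
  simp only [s, t, mem_product, mem_filter] at hab
  exact ⟨ab.1, ab.2, hab.1.2, hab.2.2, rfl⟩

end SimplexProd

section DeleteTwoCoordinates

variable {ι κ : Type*}

structure DeletesOnePerSide (p : ι → Prop) (e : κ → ι) (i₀ j₀ : ι) : Prop where
  injective : e.Injective
  range_eq : Set.range e = {i₀, j₀}ᶜ
  left : p i₀
  right : ¬ p j₀

variable {p : ι → Prop} {e : κ → ι} {i₀ j₀ : ι}

theorem DeletesOnePerSide.symm (h : DeletesOnePerSide p e i₀ j₀) :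
    DeletesOnePerSide (fun i => ¬ p i) e j₀ i₀ :=
  ⟨h.injective, by rw [h.range_eq, Set.pair_comm], h.right, not_not.2 h.left⟩

variable [Fintype κ]

def cornerSimplexProd (q : κ → Prop) [DecidablePred q] : Set (κ → ℝ) :=
  {y | (∀ k, 0 ≤ y k) ∧ ∑ k ∈ univ.filter q, y k ≤ 1 ∧
    ∑ k ∈ univ.filter (fun k => ¬ q k), y k ≤ 1}

variable [DecidablePred p]

variable (p e) in
noncomputable def extendBySums (y : κ → ℝ) : ι → ℝ :=
  Function.extend e y fun i =>
    if p i then 1 - ∑ k ∈ univ.filter (fun k => p (e k)), y k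
    else 1 - ∑ k ∈ univ.filter (fun k => ¬ p (e k)), y k

theorem extendBySums_apply_of_notMem_range {i : ι} (hi : i ∉ Set.range e) (y : κ → ℝ) :
    extendBySums p e y i = if p i then 1 - ∑ k ∈ univ.filter (fun k => p (e k)), y k
      else 1 - ∑ k ∈ univ.filter (fun k => ¬ p (e k)), y k :=
  Function.extend_apply' _ _ _ hi

theorem extendBySums_apply (he : e.Injective) (y : κ → ℝ) (k : κ) :
    extendBySums p e y (e k) = y k :=
  he.extend_apply _ _ _

theorem extendBySums_comp (he : e.Injective) (y : κ → ℝ) : extendBySums p e y ∘ e = y :=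
  funext (extendBySums_apply he y)

theorem exists_int_extendBySums_eq (he : e.Injective) {y : κ → ℝ}
    (hy : ∀ k, ∃ z : ℤ, y k = z) (i : ι) : ∃ z : ℤ, extendBySums p e y i = z := by
  choose z hz using hy
  by_cases hi : i ∈ Set.range e
  · obtain ⟨k, rfl⟩ := hi
    exact ⟨z k, by rw [extendBySums_apply he, hz]⟩
  · rw [extendBySums_apply_of_notMem_range hi]
    split
    · exact ⟨1 - ∑ k ∈ univ.filter (fun k => p (e k)), z k, by push_cast; simp only [hz]⟩
    · exact ⟨1 - ∑ k ∈ univ.filter (fun k => ¬ p (e k)), z k, by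
        push_cast; simp only [hz]⟩

variable [Fintype ι] [DecidableEq ι]

theorem DeletesOnePerSide.sum_filter
    (h : DeletesOnePerSide p e i₀ j₀) (x : ι → ℝ) :
    ∑ i ∈ univ.filter p, x i = x i₀ + ∑ k ∈ univ.filter (fun k => p (e k)), x (e k) := by
  have hrange : ∀ i, (∃ k, e k = i) ↔ i ≠ i₀ ∧ i ≠ j₀ := fun i => by
    rw [← Set.mem_range, h.range_eq]; simp
  have hsplit :
      univ.filter p = insert i₀ ((univ.filter (fun k => p (e k))).map ⟨e, h.injective⟩) := by
    ext i
    simp only [mem_filter, mem_univ, true_and, mem_insert, mem_map, Function.Embedding.coeFn_mk]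
    constructor
    · intro hpi
      by_cases hi : i = i₀
      · exact Or.inl hi
      obtain ⟨k, rfl⟩ := (hrange i).2 ⟨hi, fun hj => h.right (hj ▸ hpi)⟩
      exact Or.inr ⟨k, hpi, rfl⟩
    · rintro (rfl | ⟨k, hk, rfl⟩)
      exacts [h.left, hk]
  have hi₀ : i₀ ∉ (univ.filter (fun k => p (e k))).map ⟨e, h.injective⟩ := by
    simp only [mem_map, Function.Embedding.coeFn_mk, not_exists, not_and]
    exact fun k _ hk => ((hrange i₀).1 ⟨k, hk⟩).1 rfl
  rw [hsplit, sum_insert hi₀, sum_map]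
  rfl

theorem DeletesOnePerSide.mem_simplexProd_iff (h : DeletesOnePerSide p e i₀ j₀)
    {x : ι → ℝ} :
    x ∈ simplexProd p ↔ (∀ i, 0 ≤ x i) ∧
      x i₀ + ∑ k ∈ univ.filter (fun k => p (e k)), x (e k) = 1 ∧
      x j₀ + ∑ k ∈ univ.filter (fun k => ¬ p (e k)), x (e k) = 1 := by
  change (∀ i, 0 ≤ x i) ∧ _ ∧ _ ↔ _
  rw [h.sum_filter, h.symm.sum_filter]

theorem DeletesOnePerSide.comp_mem_cornerSimplexProd
    (h : DeletesOnePerSide p e i₀ j₀) {x : ι → ℝ} (hx : x ∈ simplexProd p) :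
    x ∘ e ∈ cornerSimplexProd (fun k => p (e k)) := by
  obtain ⟨hx₀, hxp, hxq⟩ := h.mem_simplexProd_iff.1 hx
  refine ⟨fun k => hx₀ (e k), ?_, ?_⟩ <;> simp only [Function.comp_apply]
  · linarith [hx₀ i₀]
  · linarith [hx₀ j₀]

theorem DeletesOnePerSide.injOn_comp (h : DeletesOnePerSide p e i₀ j₀) :
    Set.InjOn (· ∘ e) (simplexProd p) := by
  intro x hx y hy hxy
  have hxy' : ∀ k, x (e k) = y (e k) := congrFun hxy
  obtain ⟨-, hxp, hxq⟩ := h.mem_simplexProd_iff.1 hx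
  obtain ⟨-, hyp, hyq⟩ := h.mem_simplexProd_iff.1 hy
  simp only [hxy'] at hxp hxq
  funext i
  by_cases hi₀ : i = i₀
  · subst hi₀; linarith
  by_cases hj₀ : i = j₀
  · subst hj₀; linarith
  obtain ⟨k, rfl⟩ : i ∈ Set.range e := by rw [h.range_eq]; simp [hi₀, hj₀]
  exact hxy' k

theorem DeletesOnePerSide.extendBySums_mem_simplexProd
    (h : DeletesOnePerSide p e i₀ j₀) {y : κ → ℝ}
    (hy : y ∈ cornerSimplexProd (fun k => p (e k))) : extendBySums p e y ∈ simplexProd p := by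
  obtain ⟨hy₀, hyp, hyq⟩ := hy
  have hnot : ∀ {i}, i = i₀ ∨ i = j₀ → i ∉ Set.range e := by simp [h.range_eq]
  have hi₀ := extendBySums_apply_of_notMem_range (p := p) (hnot (Or.inl rfl)) y
  have hj₀ := extendBySums_apply_of_notMem_range (p := p) (hnot (Or.inr rfl)) y
  rw [if_pos h.left] at hi₀
  rw [if_neg h.right] at hj₀
  simp only [h.mem_simplexProd_iff, extendBySums_apply h.injective]
  refine ⟨fun i => ?_, by linarith, by linarith⟩
  by_cases hi : i ∈ Set.range e
  · obtain ⟨k, rfl⟩ := hi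
    rw [extendBySums_apply h.injective]
    exact hy₀ k
  · rw [extendBySums_apply_of_notMem_range hi]
    split <;> linarith

theorem DeletesOnePerSide.image_comp (h : DeletesOnePerSide p e i₀ j₀) :
    (· ∘ e) '' simplexProd p = cornerSimplexProd (fun k => p (e k)) :=
  (Set.image_subset_iff.2 fun _ => h.comp_mem_cornerSimplexProd).antisymm fun y hy =>
    ⟨_, h.extendBySums_mem_simplexProd hy, extendBySums_comp h.injective y⟩

end DeleteTwoCoordinates

section SkipTwo

variable (m n : ℕ)

def skipTwo (k : Fin (m + n)) : Fin (m + n + 2) :=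
  (⟨m, by omega⟩ : Fin (m + n + 2)).succAbove k.castSucc

theorem val_skipTwo (k : Fin (m + n)) :
    (skipTwo m n k : ℕ) = if (k : ℕ) < m then (k : ℕ) else (k : ℕ) + 1 := by
  simp only [skipTwo, Fin.succAbove, Fin.lt_def, Fin.val_castSucc]
  split_ifs <;> rfl

theorem proj_eq_comp_skipTwo (x : Fin (m + n + 2) → ℝ) : proj m n x = x ∘ skipTwo m n := by
  funext k
  simp only [proj, Function.comp_apply]
  split_ifs with h <;> congr 1 <;> ext <;> simp [val_skipTwo, h]

theorem skipTwo_injective : (skipTwo m n).Injective :=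
  Fin.succAbove_right_injective.comp (Fin.castSucc_injective _)

theorem range_skipTwo : Set.range (skipTwo m n) = {⟨m, by omega⟩, Fin.last _}ᶜ := by
  ext i
  simp only [Set.mem_range, Set.mem_compl_iff, Set.mem_insert_iff, Set.mem_singleton_iff,
    not_or, Fin.ext_iff, val_skipTwo, Fin.val_last]
  have := i.2
  constructor
  · rintro ⟨k, hk⟩
    have := k.2
    split_ifs at hk <;> omega
  · rintro ⟨h₀, h₁⟩
    by_cases hi : (i : ℕ) < m
    · exact ⟨⟨i, by omega⟩, by simp [hi]⟩
    · refine ⟨⟨i - 1, by omega⟩, ?_⟩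
      simp only [if_neg (show ¬ (i : ℕ) - 1 < m by omega)]
      omega

theorem skipTwo_lt_iff (k : Fin (m + n)) : (skipTwo m n k : ℕ) < m + 1 ↔ (k : ℕ) < m := by
  rw [val_skipTwo]; split_ifs <;> omega

theorem deletesOnePerSide_skipTwo :
    DeletesOnePerSide (fun i : Fin (m + n + 2) => (i : ℕ) < m + 1) (skipTwo m n)
      ⟨m, by omega⟩ (Fin.last _) :=
  ⟨skipTwo_injective m n, range_skipTwo m n, Nat.lt_succ_self m, by simp⟩

theorem edgePolytopeBip_eq_simplexProd :
    edgePolytopeBip m n = simplexProd (fun i : Fin (m + n + 2) => (i : ℕ) < m + 1) := by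
  rw [edgePolytopeBip, ← convexHull_single_add_single_eq_simplexProd]
  congr! 3 with x
  simp only [not_lt, funext_iff, Pi.add_apply, Pi.single_apply]

theorem chainPolytope_eq_cornerSimplexProd :
    chainPolytope m n = cornerSimplexProd (fun k => (skipTwo m n k : ℕ) < m + 1) := by
  simp only [chainPolytope, cornerSimplexProd, skipTwo_lt_iff, not_lt]

end SkipTwo

theorem stmt_6_general (m n : ℕ) :
    Set.InjOn (proj m n) (edgePolytopeBip m n) ∧
    proj m n '' edgePolytopeBip m n = chainPolytope m n ∧
    Set.BijOn (proj m n) (edgePolytopeBip m n ∩ latticePts (m + n + 2))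
      (chainPolytope m n ∩ latticePts (m + n)) := by
  have h := deletesOnePerSide_skipTwo m n
  rw [show proj m n = (· ∘ skipTwo m n) from funext (proj_eq_comp_skipTwo m n),
    edgePolytopeBip_eq_simplexProd, chainPolytope_eq_cornerSimplexProd]
  refine ⟨h.injOn_comp, h.image_comp, ?_, h.injOn_comp.mono Set.inter_subset_left, ?_⟩
  · exact fun x hx => ⟨h.comp_mem_cornerSimplexProd hx.1, fun k => hx.2 _⟩
  · exact fun y hy => ⟨_, ⟨h.extendBySums_mem_simplexProd hy.1,
      exists_int_extendBySums_eq h.injective hy.2⟩, extendBySums_comp h.injective y⟩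

/-- The projection deleting the `(m+1)`-st and `(m+n+2)`-nd coordinates is injective on
the edge polytope of `K_{m+1,n+1}`, maps it onto the chain polytope of `Π_{m,n}`, and
maps the lattice points of the edge polytope bijectively onto the lattice points of the
chain polytope. -/
theorem stmt_6 (m n : ℕ) (hm : 1 ≤ m) (hn : 1 ≤ n) :
    Set.InjOn (proj m n) (edgePolytopeBip m n) ∧
    proj m n '' edgePolytopeBip m n = chainPolytope m n ∧
    Set.BijOn (proj m n) (edgePolytopeBip m n ∩ latticePts (m + n + 2))
      (chainPolytope m n ∩ latticePts (m + n)) :=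
  stmt_6_general m n
end

section
/- Let k be a field and m, n ≥ 1. The k-subalgebra of the polynomial ring k[t_1,…,t_{m+n+2}] generated by the monomials t_a t_b for 1 ≤ a ≤ m+1 and m+2 ≤ b ≤ m+n+2 (the edge ring k[K_{m+1,n+1}]) is isomorphic as a k-algebra to the k-subalgebra of k[x_1,…,x_m, y_1,…,y_n, t] generated by the monomials x_1⋯x_i · y_1⋯y_j · t for 0 ≤ i ≤ m and 0 ≤ j ≤ n (the Hibi ring k[Π_{m,n}]). -/
/-!
Both rings embed into `K[x_1,…,x_m, y_1,…,y_n, s, s']`: the edge ring by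
`t_a ↦ x_1⋯x_a s` for `a ≤ m` and `t_{m+1+b} ↦ y_1⋯y_b s'`, the Hibi ring by `t ↦ s s'`.
Both embeddings send their generators onto the same monomials `x_1⋯x_i y_1⋯y_j s s'`, so the two
subalgebras have the same image. The Hibi embedding has the retraction `s ↦ t`, `s' ↦ 1`; the edge
embedding is injective because `x_a ↦ t_a / t_{a-1}`, `y_b ↦ t_{m+1+b} / t_{m+b}`, `s ↦ t_0`,
`s' ↦ t_{m+1}` undoes it inside the fraction field of `K[t]`, by telescoping.
-/

open MvPolynomial Finset

theorem prod_filter_val_lt_eq_prod_range {M : Type*} [CommMonoid M] {N c : ℕ} (hc : c ≤ N)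
    (f : ℕ → M) : ∏ i ∈ univ.filter (fun i : Fin N => (i : ℕ) < c), f i = ∏ i ∈ range c, f i := by
  rw [prod_filter, Fin.prod_univ_eq_prod_range (fun i => if i < c then f i else 1), ← prod_filter]
  congr 1
  ext
  simp only [mem_filter, mem_range]
  omega

theorem prod_filter_val_lt_units_div_mul {M : Type*} [CommMonoid M] {N c : ℕ} (hc : c ≤ N)
    (u : ℕ → Mˣ) :
    (∏ i ∈ univ.filter (fun i : Fin N => (i : ℕ) < c), ((u (i + 1) / u i : Mˣ) : M)) * u 0 =
      u c := by
  rw [prod_filter_val_lt_eq_prod_range hc (fun i => ((u (i + 1) / u i : Mˣ) : M)),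
    ← Units.coe_prod, ← Units.val_mul, mul_comm, ← eq_prod_range_div]

theorem nonempty_algEquiv_adjoin_of_image_eq {R A B C : Type*} [CommSemiring R] [Semiring A]
    [Semiring B] [Semiring C] [Algebra R A] [Algebra R B] [Algebra R C]
    {f : A →ₐ[R] C} {g : B →ₐ[R] C} (hf : Function.Injective f) (hg : Function.Injective g)
    {s : Set A} {t : Set B} (h : f '' s = g '' t) :
    Nonempty (Algebra.adjoin R s ≃ₐ[R] Algebra.adjoin R t) := by
  have hmap : (Algebra.adjoin R s).map f = (Algebra.adjoin R t).map g := by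
    rw [AlgHom.map_adjoin, AlgHom.map_adjoin, h]
  exact ⟨(Subalgebra.equivMapOfInjective _ f hf).trans <|
    (Subalgebra.equivOfEq _ _ hmap).trans (Subalgebra.equivMapOfInjective _ g hg).symm⟩

namespace EdgeRingHibiRing

section Embeddings

variable (K : Type*) [CommSemiring K] (m n : ℕ)

-- `Sum.inr (Sum.inr false)` plays `s` and `Sum.inr (Sum.inr true)` plays `s'`.
noncomputable def commonMonomial (i j : ℕ) : MvPolynomial (Fin m ⊕ Fin n ⊕ Bool) K :=
  (∏ a ∈ univ.filter (fun a : Fin m => (a : ℕ) < i), X (Sum.inl a)) *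
    (∏ b ∈ univ.filter (fun b : Fin n => (b : ℕ) < j), X (Sum.inr (Sum.inl b))) *
    (X (Sum.inr (Sum.inr false)) * X (Sum.inr (Sum.inr true)))

noncomputable def vertexMonomial (v : Fin (m + n + 2)) : MvPolynomial (Fin m ⊕ Fin n ⊕ Bool) K :=
  if (v : ℕ) < m + 1 then
    (∏ a ∈ univ.filter (fun a : Fin m => (a : ℕ) < v), X (Sum.inl a)) *
      X (Sum.inr (Sum.inr false))
  else
    (∏ b ∈ univ.filter (fun b : Fin n => (b : ℕ) < v - (m + 1)), X (Sum.inr (Sum.inl b))) *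
      X (Sum.inr (Sum.inr true))

noncomputable def edgeEmbedding :
    MvPolynomial (Fin (m + n + 2)) K →ₐ[K] MvPolynomial (Fin m ⊕ Fin n ⊕ Bool) K :=
  aeval (vertexMonomial K m n)

noncomputable def hibiGenerator (i j : ℕ) : MvPolynomial (Fin m ⊕ Fin n ⊕ Unit) K :=
  (∏ a ∈ univ.filter (fun a : Fin m => (a : ℕ) < i), X (Sum.inl a)) *
    (∏ b ∈ univ.filter (fun b : Fin n => (b : ℕ) < j), X (Sum.inr (Sum.inl b))) *
    X (Sum.inr (Sum.inr ()))

noncomputable def hibiEmbedding :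
    MvPolynomial (Fin m ⊕ Fin n ⊕ Unit) K →ₐ[K] MvPolynomial (Fin m ⊕ Fin n ⊕ Bool) K :=
  aeval fun
    | .inl a => X (.inl a)
    | .inr (.inl b) => X (.inr (.inl b))
    | .inr (.inr ()) => X (.inr (.inr false)) * X (.inr (.inr true))

noncomputable def hibiRetraction :
    MvPolynomial (Fin m ⊕ Fin n ⊕ Bool) K →ₐ[K] MvPolynomial (Fin m ⊕ Fin n ⊕ Unit) K :=
  aeval fun
    | .inl a => X (.inl a)
    | .inr (.inl b) => X (.inr (.inl b))
    | .inr (.inr false) => X (.inr (.inr ()))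
    | .inr (.inr true) => 1

theorem hibiRetraction_comp_hibiEmbedding :
    (hibiRetraction K m n).comp (hibiEmbedding K m n) = AlgHom.id K _ := by
  ext (a | b | ⟨⟩) <;> simp [hibiRetraction, hibiEmbedding]

theorem hibiEmbedding_injective : Function.Injective (hibiEmbedding K m n) :=
  Function.LeftInverse.injective (g := hibiRetraction K m n)
    (AlgHom.congr_fun (hibiRetraction_comp_hibiEmbedding K m n))

theorem hibiEmbedding_hibiGenerator (i j : ℕ) :
    hibiEmbedding K m n (hibiGenerator K m n i j) = commonMonomial K m n i j := by
  simp [hibiEmbedding, hibiGenerator, commonMonomial, map_prod]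

theorem edgeEmbedding_X_mul_X {a b : Fin (m + n + 2)} (ha : (a : ℕ) < m + 1)
    (hb : m + 1 ≤ (b : ℕ)) :
    edgeEmbedding K m n (X a * X b) = commonMonomial K m n a (b - (m + 1)) := by
  simp only [edgeEmbedding, map_mul, aeval_X, vertexMonomial, if_pos ha,
    if_neg (Nat.not_lt.2 hb), commonMonomial]
  ring

theorem image_hibiEmbedding_hibiGenerators :
    hibiEmbedding K m n '' {q | ∃ i j : ℕ, i ≤ m ∧ j ≤ n ∧ q = hibiGenerator K m n i j} =
      {p | ∃ i j : ℕ, i ≤ m ∧ j ≤ n ∧ p = commonMonomial K m n i j} := by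
  ext p
  constructor
  · rintro ⟨_, ⟨i, j, hi, hj, rfl⟩, rfl⟩
    exact ⟨i, j, hi, hj, hibiEmbedding_hibiGenerator K m n i j⟩
  · rintro ⟨i, j, hi, hj, rfl⟩
    exact ⟨_, ⟨i, j, hi, hj, rfl⟩, hibiEmbedding_hibiGenerator K m n i j⟩

theorem image_edgeEmbedding_edgeGenerators :
    edgeEmbedding K m n '' {p | ∃ a b : Fin (m + n + 2), (a : ℕ) < m + 1 ∧ m + 1 ≤ (b : ℕ) ∧
      p = X a * X b} = {p | ∃ i j : ℕ, i ≤ m ∧ j ≤ n ∧ p = commonMonomial K m n i j} := by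
  ext p
  constructor
  · rintro ⟨_, ⟨a, b, ha, hb, rfl⟩, rfl⟩
    exact ⟨a, b - (m + 1), by omega, by omega, edgeEmbedding_X_mul_X K m n ha hb⟩
  · rintro ⟨i, j, hi, hj, rfl⟩
    refine ⟨_, ⟨⟨i, by omega⟩, ⟨m + 1 + j, by omega⟩, by simpa using hi, by simp, rfl⟩, ?_⟩
    rw [edgeEmbedding_X_mul_X K m n (by simpa using hi) (by simp)]
    simp

end Embeddings

section FractionField

variable (K : Type*) [CommRing K] [IsDomain K] (m n : ℕ)

local notation "Poly" => MvPolynomial (Fin (m + n + 2)) K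
local notation "Frac" => FractionRing Poly

-- `Fin.ofNat` reduces `k` modulo `m + n + 2`; only `k ≤ m + n + 1` is ever used.
noncomputable def vertexUnit (k : ℕ) : Frac ˣ :=
  Units.mk0 (algebraMap _ Frac (X (Fin.ofNat (m + n + 2) k)))
    (IsFractionRing.to_map_eq_zero_iff.not.2 (X_ne_zero (R := K) _))

noncomputable def fractionEval : MvPolynomial (Fin m ⊕ Fin n ⊕ Bool) K →ₐ[K] Frac :=
  aeval fun
    | .inl a => ↑(vertexUnit K m n (a + 1) / vertexUnit K m n a)
    | .inr (.inl b) => ↑(vertexUnit K m n (m + 1 + (b + 1)) / vertexUnit K m n (m + 1 + b))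
    | .inr (.inr false) => ↑(vertexUnit K m n 0)
    | .inr (.inr true) => ↑(vertexUnit K m n (m + 1))

theorem fractionEval_vertexMonomial (v : Fin (m + n + 2)) :
    fractionEval K m n (vertexMonomial K m n v) = algebraMap Poly Frac (X v) := by
  have hv : algebraMap Poly Frac (X v) = vertexUnit K m n v := by simp [vertexUnit]
  rw [hv, vertexMonomial]
  split_ifs with h
  · simp only [map_mul, map_prod, fractionEval, aeval_X]
    exact prod_filter_val_lt_units_div_mul (by omega) (vertexUnit K m n)
  · simp only [map_mul, map_prod, fractionEval, aeval_X]
    rw [prod_filter_val_lt_units_div_mul (by omega) (fun i => vertexUnit K m n (m + 1 + i)),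
      Nat.add_sub_cancel' (by omega)]

theorem edgeEmbedding_injective : Function.Injective (edgeEmbedding K m n) := by
  have h : (fractionEval K m n).comp (edgeEmbedding K m n) =
      IsScalarTower.toAlgHom K Poly Frac := by
    ext v
    simpa [edgeEmbedding] using fractionEval_vertexMonomial K m n v
  refine Function.Injective.of_comp (f := fractionEval K m n) ?_
  rw [← AlgHom.coe_comp, h]
  exact IsFractionRing.injective _ _

end FractionField

end EdgeRingHibiRing

theorem stmt_7_general (K : Type*) [Field K] (m n : ℕ) :
    Nonempty (
      (Algebra.adjoin K {p : MvPolynomial (Fin (m + n + 2)) K |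
        ∃ a b : Fin (m + n + 2), (a : ℕ) < m + 1 ∧ m + 1 ≤ (b : ℕ) ∧
          p = X a * X b}) ≃ₐ[K]
      (Algebra.adjoin K {q : MvPolynomial (Fin m ⊕ Fin n ⊕ Unit) K |
        ∃ i j : ℕ, i ≤ m ∧ j ≤ n ∧
          q = (∏ a ∈ Finset.univ.filter (fun a : Fin m => (a : ℕ) < i),
                X (Sum.inl a)) *
              (∏ b ∈ Finset.univ.filter (fun b : Fin n => (b : ℕ) < j),
                X (Sum.inr (Sum.inl b))) *
              X (Sum.inr (Sum.inr ()))})) := by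
  open EdgeRingHibiRing in
  exact nonempty_algEquiv_adjoin_of_image_eq (edgeEmbedding_injective K m n)
    (hibiEmbedding_injective K m n)
    ((image_edgeEmbedding_edgeGenerators K m n).trans
      (image_hibiEmbedding_hibiGenerators K m n).symm)

/-- The edge ring `k[K_{m+1,n+1}]` (with vertices 0-based: first part `0,…,m`,
second part `m+1,…,m+n+1`) is isomorphic as a `k`-algebra to the Hibi ring
`k[Π_{m,n}]`, the subalgebra of `k[x_1,…,x_m,y_1,…,y_n,t]` generated by the monomials
`x_1⋯x_i · y_1⋯y_j · t` with `0 ≤ i ≤ m`, `0 ≤ j ≤ n`. -/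
theorem stmt_7 (K : Type*) [Field K] (m n : ℕ) (hm : 1 ≤ m) (hn : 1 ≤ n) :
    Nonempty (
      (Algebra.adjoin K {p : MvPolynomial (Fin (m + n + 2)) K |
        ∃ a b : Fin (m + n + 2), (a : ℕ) < m + 1 ∧ m + 1 ≤ (b : ℕ) ∧
          p = X a * X b}) ≃ₐ[K]
      (Algebra.adjoin K {q : MvPolynomial (Fin m ⊕ Fin n ⊕ Unit) K |
        ∃ i j : ℕ, i ≤ m ∧ j ≤ n ∧
          q = (∏ a ∈ Finset.univ.filter (fun a : Fin m => (a : ℕ) < i),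
                X (Sum.inl a)) *
              (∏ b ∈ Finset.univ.filter (fun b : Fin n => (b : ℕ) < j),
                X (Sum.inr (Sum.inl b))) *
              X (Sum.inr (Sum.inr ()))})) :=
  stmt_7_general K m n
end

section
/- Let k be a field and m, n ≥ 1. The k-subalgebra of the polynomial ring k[t_1,…,t_{m+n+1}] generated by the monomials t_i t_j for 1 ≤ i ≤ m < j ≤ m+n together with t_k t_{m+n+1} for 1 ≤ k ≤ m+n (the edge ring k[K_{1,m,n}]) is isomorphic as a k-algebra to the k-subalgebra of k[x_1,…,x_m, y_1,…,y_n, t] generated by the monomials x_1⋯x_i · y_1⋯y_j · t for 0 ≤ i ≤ m, 0 ≤ j ≤ n with (i,j) ≠ (0,n) (the Hibi ring k[Π'_{m,n}]). -/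
/-!
Both rings are monomial subalgebras, so it suffices to find injective monomial substitutions of
their polynomial rings into a common polynomial ring that carry the two generating sets onto the
same monomials. We take `k[x, y, t]` itself as target. On the Hibi side substitute
`t ↦ y_0⋯y_{n-1} t²`; on the edge side send vertex `c < m` to `x_0⋯x_c · y_0⋯y_{n-1} · t` and
vertex `m + j` to `y_0⋯y_{j-1} · t`. Then the edge `{i-1, m+j}` and the edge `{m+j, m+n}` go to the
images of the poset ideals `(i, j)` and `(0, j)`. The vertex monomials are the products over
the initial segments of the single chain `t, y_0, …, y_{n-1}, x_0, …, x_{m-1}`, so the edge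
substitution is injective by triangularity; the Hibi substitution acts on exponents by
`u ↦ u + u_t · (y_0 + ⋯ + y_{n-1} + t)`, which is injective.
-/

open MvPolynomial Function Finsupp

noncomputable def Algebra.adjoinEquivOfImageEq {R A B C : Type*} [CommSemiring R] [Semiring A]
    [Semiring B] [Semiring C] [Algebra R A] [Algebra R B] [Algebra R C] (f : A →ₐ[R] C)
    (g : B →ₐ[R] C) (hf : Injective f) (hg : Injective g) {s : Set A} {t : Set B}
    (h : f '' s = g '' t) : Algebra.adjoin R s ≃ₐ[R] Algebra.adjoin R t :=
  (Subalgebra.equivMapOfInjective _ f hf).trans <|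
    (Subalgebra.equivOfEq _ _ (by rw [AlgHom.map_adjoin, AlgHom.map_adjoin, h])).trans
      (Subalgebra.equivMapOfInjective _ g hg).symm

theorem MvPolynomial.aeval_monomial_injective {σ τ R : Type*} [CommSemiring R]
    (w : σ → τ →₀ ℕ) (hw : Injective (linearCombination ℕ w)) :
    Injective (aeval fun v => monomial (w v) (1 : R) : MvPolynomial σ R → MvPolynomial τ R) := by
  have : aeval (fun v => monomial (w v) (1 : R)) =
      AddMonoidAlgebra.mapDomainAlgHom R R (linearCombination ℕ w : (σ →₀ ℕ) →+ (τ →₀ ℕ)) := by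
    refine algHom_ext fun v => ?_
    rw [aeval_X]
    simp [X, monomial, AddMonoidAlgebra.mapDomain_single]
  rw [this]
  exact AddMonoidAlgebra.mapDomain_injective hw

theorem MvPolynomial.aeval_update_X_mul_monomial_injective {σ R : Type*} [CommSemiring R]
    [DecidableEq σ] (v₀ : σ) (d : σ →₀ ℕ) :
    Injective (aeval (update X v₀ (monomial d 1 * X v₀)) :
      MvPolynomial σ R → MvPolynomial σ R) := by
  set w : σ → σ →₀ ℕ := fun v => single v 1 + if v = v₀ then d else 0
  have hw : update X v₀ (monomial d 1 * X v₀) = fun v => monomial (w v) (1 : R) := by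
    funext v
    by_cases hv : v = v₀
    · subst hv; simp [w, X, monomial_mul, add_comm]
    · simp [w, hv, X]
  have hlin : ∀ u, linearCombination ℕ w u = u + u v₀ • d := by
    intro u
    simp only [w, linearCombination_apply, smul_add, smul_single, smul_eq_mul, mul_one, smul_ite,
      nsmul_zero, sum_add, sum_single, sum_ite_eq', Finsupp.mem_support_iff, ne_eq, ite_not,
      add_right_inj, ite_eq_right_iff]
    exact fun h => by rw [h, zero_smul]
  rw [hw]
  refine aeval_monomial_injective w fun u u' h => ?_
  rw [hlin, hlin] at h
  have h₀ : u v₀ = u' v₀ := by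
    have := congr($h v₀)
    simp only [Finsupp.add_apply, Finsupp.smul_apply, smul_eq_mul] at this
    exact Nat.eq_of_mul_eq_mul_right (Nat.succ_pos (d v₀)) (by linarith)
  rw [h₀] at h
  exact add_right_cancel h

theorem MvPolynomial.prod_X_eq_monomial {σ R : Type*} [CommSemiring R] (s : Finset σ) :
    ∏ v ∈ s, X v = monomial (∑ v ∈ s, single v 1) (1 : R) := by
  rw [monomial_sum_one]; rfl

theorem MvPolynomial.aeval_prod_X_filter_le_injective {ι τ α R : Type*} [CommSemiring R]
    [Fintype τ] [LinearOrder α] (κ : τ → α) (ρ : ι → α) (hρ : Injective ρ)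
    (hκ : ∀ c, ∃ v, κ v = ρ c) :
    Injective (aeval fun c => ∏ v ∈ Finset.univ.filter (fun v => κ v ≤ ρ c), X v :
      MvPolynomial ι R → MvPolynomial τ R) := by
  classical
  have : Finite ι := Finite.of_injective (fun c => (⟨ρ c, hκ c⟩ : Set.range κ))
    fun c c' h => hρ congr(($h).1)
  cases nonempty_fintype ι
  simp_rw [prod_X_eq_monomial]
  refine aeval_monomial_injective _ fun u u' h => ?_
  have coord : ∀ (u : ι →₀ ℕ) v, linearCombination ℕ
      (fun c => ∑ v ∈ Finset.univ.filter (fun v => κ v ≤ ρ c), single v 1) u v =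
      ∑ c ∈ Finset.univ.filter (fun c => κ v ≤ ρ c), u c := by
    intro u v
    rw [linearCombination_apply, Finsupp.sum_fintype _ _ (by simp), Finsupp.finsetSum_apply,
      Finset.sum_filter]
    simp only [Finsupp.smul_apply, Finsupp.finsetSum_apply, single_apply, Finset.sum_ite_eq',
      Finset.mem_filter, Finset.mem_univ, true_and, smul_eq_mul, mul_ite, mul_one, mul_zero]
  by_contra hne
  have hD : (Finset.univ.filter fun c => u c ≠ u' c).Nonempty := by
    simpa [Finset.filter_nonempty_iff] using DFunLike.ne_iff.mp hne
  -- at a variable in position `ρ c`, with `ρ c` maximal among the disagreements, only the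
  -- coefficient of `c` can differ
  obtain ⟨c, hc, hmax⟩ := Finset.exists_max_image _ ρ hD
  obtain ⟨v, hv⟩ := hκ c
  have := congr($h v)
  have hcv : c ∈ Finset.univ.filter fun c' => κ v ≤ ρ c' := by simp [hv]
  rw [coord, coord, ← Finset.add_sum_erase _ _ hcv, ← Finset.add_sum_erase _ u' hcv,
    Finset.sum_congr rfl fun c' hc' => ?_] at this
  · exact (Finset.mem_filter.mp hc).2 (add_right_cancel this)
  obtain ⟨hc'c, hc'⟩ := Finset.mem_erase.mp hc'
  by_contra hu
  exact hc'c (hρ ((hmax c' (by simpa using hu)).antisymm (hv ▸ (Finset.mem_filter.mp hc').2)))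

namespace CompleteTripartite

variable {R : Type*} [CommSemiring R] {m n : ℕ}

noncomputable def xPrefix (i : ℕ) : MvPolynomial (Fin m ⊕ Fin n ⊕ Unit) R :=
  ∏ a ∈ Finset.univ.filter (fun a : Fin m => (a : ℕ) < i), X (Sum.inl a)

noncomputable def yPrefix (j : ℕ) : MvPolynomial (Fin m ⊕ Fin n ⊕ Unit) R :=
  ∏ b ∈ Finset.univ.filter (fun b : Fin n => (b : ℕ) < j), X (Sum.inr (Sum.inl b))

theorem xPrefix_zero : (xPrefix 0 : MvPolynomial (Fin m ⊕ Fin n ⊕ Unit) R) = 1 := by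
  simp [xPrefix]

theorem yPrefix_of_le {j : ℕ} (h : n ≤ j) :
    (yPrefix j : MvPolynomial (Fin m ⊕ Fin n ⊕ Unit) R) = yPrefix n := by
  simp only [yPrefix]
  congr 1
  ext b
  simp only [Finset.mem_filter, Finset.mem_univ, true_and]
  omega

/- Positions in the chains `t, y_0, …, y_{n-1}, x_0, …, x_{m-1}` of variables and
`m, m+1, …, m+n, 0, …, m-1` of vertices; a vertex goes to the product of the variables whose
position does not exceed its own. -/
variable (m n) in
def variablePosition : Fin m ⊕ Fin n ⊕ Unit → ℕ :=
  Sum.elim (fun a => n + 1 + a) (Sum.elim (fun b => b + 1) fun _ => 0)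

theorem prod_X_filter_variablePosition_le (k : ℕ) :
    ∏ v ∈ Finset.univ.filter (fun v => variablePosition m n v ≤ k), (X v : MvPolynomial _ R) =
      xPrefix (k - n) * yPrefix k * X (Sum.inr (Sum.inr ())) := by
  rw [Finset.prod_filter, Fintype.prod_sum_type, Fintype.prod_sum_type, xPrefix, yPrefix,
    Finset.prod_filter, Finset.prod_filter]
  simp only [variablePosition, Sum.elim_inl, Sum.elim_inr, Finset.univ_unique,
    Finset.prod_singleton, zero_le, if_true]
  rw [mul_assoc]
  congr 1
  exact Finset.prod_congr rfl fun a _ => if_congr (by omega) rfl rfl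

variable (m n) in
def vertexPosition (c : Fin (m + n + 1)) : ℕ :=
  if (c : ℕ) < m then c + n + 1 else c - m

theorem vertexPosition_injective : Injective (vertexPosition m n) := by
  intro c c' h
  simp only [vertexPosition] at h
  ext
  split_ifs at h <;> omega

variable (R m n) in
noncomputable def edgeEmbedding :
    MvPolynomial (Fin (m + n + 1)) R →ₐ[R] MvPolynomial (Fin m ⊕ Fin n ⊕ Unit) R :=
  aeval fun c =>
    ∏ v ∈ Finset.univ.filter (fun v => variablePosition m n v ≤ vertexPosition m n c), X v

variable (R m n) in
noncomputable def hibiEmbedding :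
    MvPolynomial (Fin m ⊕ Fin n ⊕ Unit) R →ₐ[R] MvPolynomial (Fin m ⊕ Fin n ⊕ Unit) R :=
  aeval (update X (Sum.inr (Sum.inr ()))
    (yPrefix n * X (Sum.inr (Sum.inr ())) * X (Sum.inr (Sum.inr ()))))

theorem edgeEmbedding_injective : Injective (edgeEmbedding R m n) := by
  refine aeval_prod_X_filter_le_injective _ _ vertexPosition_injective fun c => ?_
  by_cases hc : (c : ℕ) < m
  · refine ⟨Sum.inl ⟨c, hc⟩, ?_⟩
    simp only [variablePosition, Sum.elim_inl, vertexPosition, hc, if_true]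
    omega
  simp only [vertexPosition, hc, if_false]
  rcases Nat.eq_or_lt_of_le (not_lt.mp hc) with hc' | hc'
  · exact ⟨Sum.inr (Sum.inr ()), by simp only [variablePosition, Sum.elim_inr]; omega⟩
  · exact ⟨Sum.inr (Sum.inl ⟨c - m - 1, by omega⟩), by
      simp only [variablePosition, Sum.elim_inr, Sum.elim_inl]; omega⟩

theorem yPrefix_mul_X_eq_monomial :
    (yPrefix n * X (Sum.inr (Sum.inr ())) : MvPolynomial (Fin m ⊕ Fin n ⊕ Unit) R) =
      monomial
        (∑ b : Fin n, single (Sum.inr (Sum.inl b)) 1 + single (Sum.inr (Sum.inr ())) 1) 1 := by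
  rw [← mul_one (1 : R), ← monomial_mul, monomial_sum_one, yPrefix]
  congr 1
  exact Finset.prod_congr (by ext b; simp) fun _ _ => rfl

theorem hibiEmbedding_injective : Injective (hibiEmbedding R m n) := by
  rw [hibiEmbedding, yPrefix_mul_X_eq_monomial]
  exact aeval_update_X_mul_monomial_injective _ _

theorem edgeEmbedding_X_of_lt (c : Fin (m + n + 1)) (hc : (c : ℕ) < m) :
    edgeEmbedding R m n (X c) = xPrefix (c + 1) * yPrefix n * X (Sum.inr (Sum.inr ())) := by
  rw [edgeEmbedding, aeval_X, prod_X_filter_variablePosition_le, vertexPosition, if_pos hc,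
    yPrefix_of_le (by omega)]
  congr 3
  omega

theorem edgeEmbedding_X_of_le (c : Fin (m + n + 1)) (hc : m ≤ (c : ℕ)) :
    edgeEmbedding R m n (X c) = yPrefix (c - m) * X (Sum.inr (Sum.inr ())) := by
  rw [edgeEmbedding, aeval_X, prod_X_filter_variablePosition_le, vertexPosition,
    if_neg (by omega), show (c : ℕ) - m - n = 0 by omega, xPrefix_zero, one_mul]

theorem hibiEmbedding_xPrefix_mul_yPrefix_mul_X (i j : ℕ) :
    hibiEmbedding R m n (xPrefix i * yPrefix j * X (Sum.inr (Sum.inr ()))) =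
      xPrefix i * yPrefix j *
        (yPrefix n * X (Sum.inr (Sum.inr ())) * X (Sum.inr (Sum.inr ()))) := by
  simp [hibiEmbedding, xPrefix, yPrefix, map_prod]

theorem edgeEmbedding_X_last :
    edgeEmbedding R m n (X (Fin.last (m + n))) = yPrefix n * X (Sum.inr (Sum.inr ())) := by
  rw [edgeEmbedding_X_of_le _ (by simp)]
  simp

variable (R m n) in
def edgeGenerators : Set (MvPolynomial (Fin (m + n + 1)) R) :=
  {p | (∃ a b : Fin (m + n + 1), (a : ℕ) < m ∧ m ≤ (b : ℕ) ∧ (b : ℕ) < m + n ∧ p = X a * X b) ∨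
    (∃ c : Fin (m + n + 1), (c : ℕ) < m + n ∧ p = X c * X (Fin.last (m + n)))}

variable (R m n) in
def hibiGenerators : Set (MvPolynomial (Fin m ⊕ Fin n ⊕ Unit) R) :=
  {q | ∃ i j : ℕ, i ≤ m ∧ j ≤ n ∧ ¬(i = 0 ∧ j = n) ∧
    q = xPrefix i * yPrefix j * X (Sum.inr (Sum.inr ()))}

theorem edgeEmbedding_image_subset :
    edgeEmbedding R m n '' edgeGenerators R m n ⊆ hibiEmbedding R m n '' hibiGenerators R m n := by
  rintro _ ⟨p, ⟨a, b, ha, hmb, hb, rfl⟩ | ⟨c, hc, rfl⟩, rfl⟩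
  · refine ⟨_, ⟨a + 1, b - m, by omega, by omega, by omega, rfl⟩, ?_⟩
    rw [hibiEmbedding_xPrefix_mul_yPrefix_mul_X, map_mul, edgeEmbedding_X_of_lt a ha,
      edgeEmbedding_X_of_le b hmb]
    ring
  · rw [map_mul, edgeEmbedding_X_last]
    by_cases hcm : (c : ℕ) < m
    · refine ⟨_, ⟨c + 1, n, by omega, le_rfl, by omega, rfl⟩, ?_⟩
      rw [hibiEmbedding_xPrefix_mul_yPrefix_mul_X, edgeEmbedding_X_of_lt c hcm]
      ring
    · refine ⟨_, ⟨0, c - m, by omega, by omega, by omega, rfl⟩, ?_⟩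
      rw [hibiEmbedding_xPrefix_mul_yPrefix_mul_X, edgeEmbedding_X_of_le c (by omega),
        xPrefix_zero]
      ring

theorem hibiEmbedding_image_subset :
    hibiEmbedding R m n '' hibiGenerators R m n ⊆ edgeEmbedding R m n '' edgeGenerators R m n := by
  rintro _ ⟨_, ⟨i, j, hi, hj, hij, rfl⟩, rfl⟩
  rw [hibiEmbedding_xPrefix_mul_yPrefix_mul_X]
  rcases Nat.eq_zero_or_pos i with rfl | hi0
  · refine ⟨_, Or.inr ⟨⟨m + j, by omega⟩, by simp; omega, rfl⟩, ?_⟩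
    rw [map_mul, edgeEmbedding_X_last, edgeEmbedding_X_of_le _ (by simp), xPrefix_zero]
    simp only [add_tsub_cancel_left]
    ring
  rcases Nat.lt_or_ge j n with hjn | hjn
  · refine ⟨_, Or.inl ⟨⟨i - 1, by omega⟩, ⟨m + j, by omega⟩, by simp; omega, by simp,
      by simp; omega, rfl⟩, ?_⟩
    rw [map_mul, edgeEmbedding_X_of_lt _ (by simp; omega), edgeEmbedding_X_of_le _ (by simp)]
    simp only [add_tsub_cancel_left, Nat.sub_add_cancel hi0]
    ring
  · obtain rfl : j = n := le_antisymm hj hjn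
    refine ⟨_, Or.inr ⟨⟨i - 1, by omega⟩, by simp; omega, rfl⟩, ?_⟩
    rw [map_mul, edgeEmbedding_X_last, edgeEmbedding_X_of_lt _ (by simp; omega)]
    simp only [Nat.sub_add_cancel hi0]
    ring

end CompleteTripartite

open CompleteTripartite

/-- The edge ring `k[K_{1,m,n}]` (vertices 0-based: parts `{0,…,m-1}`, `{m,…,m+n-1}`,
`{m+n}`) is isomorphic as a `k`-algebra to the Hibi ring `k[Π'_{m,n}]`, the subalgebra
of `k[x_1,…,x_m,y_1,…,y_n,t]` generated by the monomials `x_1⋯x_i · y_1⋯y_j · t` with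
`0 ≤ i ≤ m`, `0 ≤ j ≤ n`, `(i,j) ≠ (0,n)`. -/
theorem stmt_8 (K : Type*) [Field K] (m n : ℕ) :
    Nonempty (
      (Algebra.adjoin K {p : MvPolynomial (Fin (m + n + 1)) K |
        (∃ a b : Fin (m + n + 1), (a : ℕ) < m ∧ m ≤ (b : ℕ) ∧ (b : ℕ) < m + n ∧
          p = X a * X b) ∨
        (∃ c : Fin (m + n + 1), (c : ℕ) < m + n ∧
          p = X c * X (⟨m + n, by omega⟩ : Fin (m + n + 1)))}) ≃ₐ[K]
      (Algebra.adjoin K {q : MvPolynomial (Fin m ⊕ Fin n ⊕ Unit) K |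
        ∃ i j : ℕ, i ≤ m ∧ j ≤ n ∧ ¬(i = 0 ∧ j = n) ∧
          q = (∏ a ∈ Finset.univ.filter (fun a : Fin m => (a : ℕ) < i),
                X (Sum.inl a)) *
              (∏ b ∈ Finset.univ.filter (fun b : Fin n => (b : ℕ) < j),
                X (Sum.inr (Sum.inl b))) *
              X (Sum.inr (Sum.inr ()))})) :=
  ⟨Algebra.adjoinEquivOfImageEq (edgeEmbedding K m n) (hibiEmbedding K m n)
    edgeEmbedding_injective hibiEmbedding_injective
    (edgeEmbedding_image_subset.antisymm hibiEmbedding_image_subset)⟩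
end

section
/- Let n = 3 with 2 ≤ r_1 ≤ r_2 ≤ r_3, assume d ∈ V_3, and let c = (c_1,c_2,c_3) ∈ ℤ^3. If c ∈ C(r_1,r_2,r_3), then there exists x ∈ ℝ^d with −1 < x_k ≤ 0 for all k = 1,…,d such that c_j − 1 < τ_j(x) ≤ c_j for j = 1,2,3. -/
/-!
Put `t = x_d` and let `S_i` be the sum of `x` over `V_i` for `i = 1, 2` and over
`V_3 ∖ {d}` for `i = 3`. Then `τ_1 = S_2 - t`, `τ_2 = S_1 - t`, `τ_3 = S_1 + S_2 - S_3 - 2t`,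
and any value of `S_i` in `(-|block|, 0]` is attained by a constant block. Hence it suffices to
find `a ≈ c_2`, `b ≈ c_1` (the future `τ_2`, `τ_1`) just below the lattice point. In the
coordinates `a + b` and `a - b` the constraints decouple into two one-dimensional problems, each
about an integer in an interval, solved by stepping off the endpoints. The common shift
`t = -max 0 (max a b)` puts `S_1 = a + t` and `S_2 = b + t` in range, and `S_3` is
`(a + b - c_3)` scaled by `(r_3 - 1) / r_3`.
-/

/-- The linear form `τ_j(x) = Σ_{k ∈ V_1 ∪ V_2} x_k - Σ_{ℓ ∈ V_j} x_ℓ - x_d` (for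
`n = 3`, where `vlast` is the last coordinate `d`). -/
noncomputable def tau3 (d : ℕ) (V1 V2 Vj : Finset (Fin d)) (vlast : Fin d)
    (x : Fin d → ℝ) : ℝ :=
  (∑ k ∈ V1 ∪ V2, x k) - (∑ k ∈ Vj, x k) - x vlast

/-- Membership of `(z_1,z_2,z_3) ∈ ℤ^3` in the polytope `C(r_1,r_2,r_3)`. -/
def inC3 (r1 r2 r3 : ℕ) (z1 z2 z3 : ℤ) : Prop :=
  -(r2 : ℤ) ≤ z1 - z2 ∧ z1 - z2 ≤ (r1 : ℤ) ∧
  -(r3 : ℤ) ≤ z1 - z3 ∧ z1 - z3 ≤ (r1 : ℤ) ∧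
  -(r3 : ℤ) ≤ z2 - z3 ∧ z2 - z3 ≤ (r2 : ℤ) ∧
  -(r2 : ℤ) + 1 ≤ z1 ∧ z1 ≤ 1 ∧
  -(r1 : ℤ) + 1 ≤ z2 ∧ z2 ≤ 1 ∧
  -(r3 : ℤ) + 1 ≤ z1 + z2 - z3 ∧ z1 + z2 - z3 ≤ 1

open Set

lemma tau3_eq_of_disjoint {d : ℕ} {V1 V2 : Finset (Fin d)} (h : Disjoint V1 V2)
    (Vj : Finset (Fin d)) (p : Fin d) (x : Fin d → ℝ) :
    tau3 d V1 V2 Vj p x = ∑ k ∈ V1, x k + ∑ k ∈ V2, x k - ∑ k ∈ Vj, x k - x p := by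
  rw [tau3, Finset.sum_union h]

lemma exists_sum_eq_of_mem_Ioc {ι : Type*} (s : Finset ι) {v : ℝ}
    (hv : v ∈ Ioc (-(s.card : ℝ)) 0) :
    ∃ y : ι → ℝ, (∀ k, y k ∈ Ioc (-1) 0) ∧ ∑ k ∈ s, y k = v := by
  obtain ⟨hlo, hhi⟩ := hv
  have hs : (0 : ℝ) < s.card := by linarith
  refine ⟨fun _ => v / s.card, fun _ => ⟨?_, div_nonpos_of_nonpos_of_nonneg hhi hs.le⟩, ?_⟩
  · rwa [lt_div_iff₀ hs, neg_one_mul]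
  · rw [Finset.sum_const, nsmul_eq_mul, mul_div_cancel₀ _ hs.ne']

lemma exists_block_sums {ι : Type*} [DecidableEq ι] {V1 V2 V3 : Finset ι} (h12 : Disjoint V1 V2)
    (h13 : Disjoint V1 V3) (h23 : Disjoint V2 V3) {p : ι} (hp : p ∈ V3) {t s1 s2 s3 : ℝ}
    (ht : t ∈ Ioc (-1) 0) (hs1 : s1 ∈ Ioc (-(V1.card : ℝ)) 0)
    (hs2 : s2 ∈ Ioc (-(V2.card : ℝ)) 0) (hs3 : s3 ∈ Ioc (-((V3.erase p).card : ℝ)) 0) :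
    ∃ x : ι → ℝ, (∀ k, x k ∈ Ioc (-1) 0) ∧ x p = t ∧ ∑ k ∈ V1, x k = s1 ∧
      ∑ k ∈ V2, x k = s2 ∧ ∑ k ∈ V3, x k = t + s3 := by
  obtain ⟨y1, hy1, rfl⟩ := exists_sum_eq_of_mem_Ioc V1 hs1
  obtain ⟨y2, hy2, rfl⟩ := exists_sum_eq_of_mem_Ioc V2 hs2
  obtain ⟨y3, hy3, rfl⟩ := exists_sum_eq_of_mem_Ioc (V3.erase p) hs3
  refine ⟨fun k => if k = p then t else if k ∈ V1 then y1 k else if k ∈ V2 then y2 k else y3 k,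
    fun k => ?_, if_pos rfl, Finset.sum_congr rfl fun k hk => ?_,
    Finset.sum_congr rfl fun k hk => ?_, ?_⟩
  · dsimp only
    split_ifs
    exacts [ht, hy1 k, hy2 k, hy3 k]
  · have hkp : k ≠ p := ne_of_mem_of_not_mem hk (Finset.disjoint_right.mp h13 hp)
    simp only [if_neg hkp, if_pos hk]
  · have hkp : k ≠ p := ne_of_mem_of_not_mem hk (Finset.disjoint_right.mp h23 hp)
    simp only [if_neg hkp, if_neg (Finset.disjoint_right.mp h12 hk), if_pos hk]
  · rw [← Finset.add_sum_erase _ _ hp, if_pos rfl]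
    refine congrArg _ (Finset.sum_congr rfl fun k hk => ?_)
    obtain ⟨hkp, hk3⟩ := Finset.mem_erase.mp hk
    simp only [if_neg hkp, if_neg (Finset.disjoint_right.mp h13 hk3),
      if_neg (Finset.disjoint_right.mp h23 hk3)]

lemma exists_common_shift {a b p q : ℝ} (hp : 0 < p) (hq : 0 < q) (ha1 : a < 1) (hb1 : b < 1)
    (ha : -p < a) (hb : -q < b) (hab : b - a < p) (hba : a - b < q) :
    ∃ t ∈ Ioc (-1 : ℝ) 0, a + t ∈ Ioc (-p) 0 ∧ b + t ∈ Ioc (-q) 0 := by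
  have h0 : 0 ≤ max 0 (max a b) := le_max_left _ _
  have ha' : a ≤ max 0 (max a b) := (le_max_left a b).trans (le_max_right _ _)
  have hb' : b ≤ max 0 (max a b) := (le_max_right a b).trans (le_max_right _ _)
  have h1 : max 0 (max a b) < 1 := max_lt one_pos (max_lt ha1 hb1)
  have hpa : max 0 (max a b) < p + a := max_lt (by linarith) (max_lt (by linarith) (by linarith))
  have hqb : max 0 (max a b) < q + b := max_lt (by linarith) (max_lt (by linarith) (by linarith))
  exact ⟨-max 0 (max a b), ⟨by linarith, by linarith⟩, ⟨by linarith, by linarith⟩,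
    ⟨by linarith, by linarith⟩⟩

lemma exists_mem_Ioc_mem_Ico_of_scale {B n : ℝ} (hn : 0 < n) (hB : B ∈ Ioc (-(n + 1)) 0) :
    ∃ s ∈ Ioc (-n) 0, s ∈ Ico B (B + 1) := by
  obtain ⟨hlo, hhi⟩ := hB
  have hn1 : 0 < n + 1 := by linarith
  refine ⟨B * n / (n + 1), ⟨?_, ?_⟩, ?_, ?_⟩
  · rw [lt_div_iff₀ hn1]; nlinarith
  · exact div_nonpos_of_nonpos_of_nonneg (mul_nonpos_of_nonpos_of_nonneg hhi hn.le) hn1.le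
  · rw [le_div_iff₀ hn1]; nlinarith
  · rw [div_lt_iff₀ hn1]; nlinarith

lemma exists_sum_offset {k : ℤ} {n : ℕ} (hn : 0 < n) (hk : k ≤ 1) (hkn : 1 - (n : ℤ) ≤ k) :
    ∃ A ∈ Icc (1 / 2 : ℝ) 1, (k : ℝ) ≤ A ∧ A < k + n := by
  rcases (show k = 1 ∨ k ≤ 0 by omega) with rfl | hk0
  · have : (0 : ℝ) < n := by exact_mod_cast hn
    exact ⟨1, by norm_num, by norm_num, by push_cast; linarith⟩
  · have h0 : (k : ℝ) ≤ 0 := by exact_mod_cast hk0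
    have h1 : (1 : ℝ) ≤ k + n := by exact_mod_cast (by omega : 1 ≤ k + n)
    exact ⟨1 / 2, by norm_num, by linarith, by linarith⟩

lemma exists_difference_offset {m : ℤ} {p q : ℕ} (hpq : 0 < p + q) (hqm : -(q : ℤ) ≤ m)
    (hmp : m ≤ p) : ∃ e ∈ Icc (-1 / 8 : ℝ) (1 / 8), (m : ℝ) - 2 * e < p ∧ 2 * e - m < q := by
  have hpq' : (1 : ℝ) ≤ p + q := by exact_mod_cast hpq
  rcases (show m = p ∨ m = -q ∨ (m < p ∧ -(q : ℤ) < m) by omega) with rfl | rfl | ⟨hmp', hqm'⟩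
  · exact ⟨1 / 8, by norm_num, by push_cast; linarith, by push_cast; linarith⟩
  · exact ⟨-1 / 8, by norm_num, by push_cast; linarith, by push_cast; linarith⟩
  · have h1 : (m : ℝ) < p := by exact_mod_cast hmp'
    have h2 : -(q : ℝ) < m := by exact_mod_cast hqm'
    exact ⟨0, by norm_num, by linarith, by linarith⟩

lemma inC3.exists_reduced {r1 r2 r3 : ℕ} {c1 c2 c3 : ℤ} (hC : inC3 r1 r2 r3 c1 c2 c3)
    (hr1 : 0 < r1) (hr2 : 0 < r2) (hr3 : 0 < r3) :
    ∃ a b t : ℝ, a ∈ Ioc (c2 - 1 : ℝ) c2 ∧ b ∈ Ioc (c1 - 1 : ℝ) c1 ∧ t ∈ Ioc (-1) 0 ∧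
      a + t ∈ Ioc (-(r1 : ℝ)) 0 ∧ b + t ∈ Ioc (-(r2 : ℝ)) 0 ∧
      a + b - c3 ∈ Ioc (-(r3 : ℝ)) 0 := by
  obtain ⟨hm1, hm2, -, -, -, -, hc1, hc1', hc2, hc2', hk1, hk2⟩ := hC
  obtain ⟨A, ⟨hA, hA'⟩, hkA, hAk⟩ := exists_sum_offset hr3 hk2 (by omega)
  obtain ⟨e, ⟨he, he'⟩, hem1, hem2⟩ := exists_difference_offset (by omega) hm1 hm2
  have hc1R : (1 : ℝ) - r2 ≤ c1 := by exact_mod_cast (by omega : 1 - (r2 : ℤ) ≤ c1)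
  have hc2R : (1 : ℝ) - r1 ≤ c2 := by exact_mod_cast (by omega : 1 - (r1 : ℤ) ≤ c2)
  have hc1R' : (c1 : ℝ) ≤ 1 := by exact_mod_cast hc1'
  have hc2R' : (c2 : ℝ) ≤ 1 := by exact_mod_cast hc2'
  have hr1R : (0 : ℝ) < r1 := by exact_mod_cast hr1
  have hr2R : (0 : ℝ) < r2 := by exact_mod_cast hr2
  push_cast at hkA hAk hem1 hem2
  -- `a = c2 - α`, `b = c1 - β` with `α + β = A`, `α - β = -2e`
  obtain ⟨t, ht, hat, hbt⟩ := exists_common_shift (a := c2 - A / 2 + e) (b := c1 - A / 2 - e)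
    hr1R hr2R (by linarith) (by linarith) (by linarith) (by linarith) (by linarith) (by linarith)
  exact ⟨_, _, t, ⟨by linarith, by linarith⟩, ⟨by linarith, by linarith⟩, ht, hat, hbt,
    ⟨by linarith, by linarith⟩⟩

theorem stmt_10_general (r1 r2 r3 : ℕ) (h1 : 2 ≤ r1) (h12 : r1 ≤ r2) (h23 : r2 ≤ r3)
    (d : ℕ)
    (V1 V2 V3 : Finset (Fin d))
    (hc1 : V1.card = r1) (hc2 : V2.card = r2) (hc3 : V3.card = r3)
    (hd12 : Disjoint V1 V2) (hd13 : Disjoint V1 V3) (hd23 : Disjoint V2 V3)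
    (vlast : Fin d) (hlast : vlast ∈ V3)
    (c1 c2 c3 : ℤ) (hC : inC3 r1 r2 r3 c1 c2 c3) :
    ∃ x : Fin d → ℝ, (∀ k, -1 < x k ∧ x k ≤ 0) ∧
      ((c1 : ℝ) - 1 < tau3 d V1 V2 V1 vlast x ∧ tau3 d V1 V2 V1 vlast x ≤ (c1 : ℝ)) ∧
      ((c2 : ℝ) - 1 < tau3 d V1 V2 V2 vlast x ∧ tau3 d V1 V2 V2 vlast x ≤ (c2 : ℝ)) ∧
      ((c3 : ℝ) - 1 < tau3 d V1 V2 V3 vlast x ∧ tau3 d V1 V2 V3 vlast x ≤ (c3 : ℝ)) := by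
  obtain ⟨a, b, t, ⟨ha, ha'⟩, ⟨hb, hb'⟩, ht, hat, hbt, habc⟩ :=
    hC.exists_reduced (by omega) (by omega) (by omega)
  have hcard : (V3.erase vlast).card + 1 = r3 := hc3 ▸ Finset.card_erase_add_one hlast
  rw [← hcard, Nat.cast_succ] at habc
  obtain ⟨s, hs, hs', hs''⟩ := exists_mem_Ioc_mem_Ico_of_scale
    (by exact_mod_cast (by omega : 0 < (V3.erase vlast).card)) habc
  obtain ⟨x, hx, hxp, hx1, hx2, hx3⟩ :=
    exists_block_sums hd12 hd13 hd23 hlast ht (hc1 ▸ hat) (hc2 ▸ hbt) hs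
  refine ⟨x, hx, ?_, ?_, ?_⟩ <;>
    simp only [tau3_eq_of_disjoint hd12, hx1, hx2, hx3, hxp] <;> constructor <;> linarith

/-- Implication (b) ⇒ (a) for `n = 3`, `2 ≤ r_1 ≤ r_2 ≤ r_3`: every lattice point `c` of
`C(r_1,r_2,r_3)` arises as `c_j - 1 < τ_j(x) ≤ c_j` (`j = 1,2,3`) for some
`x ∈ (-1,0]^d`. -/
theorem stmt_10 (r1 r2 r3 : ℕ) (h1 : 2 ≤ r1) (h12 : r1 ≤ r2) (h23 : r2 ≤ r3)
    (d : ℕ) (hd : d = r1 + r2 + r3)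
    (V1 V2 V3 : Finset (Fin d))
    (hc1 : V1.card = r1) (hc2 : V2.card = r2) (hc3 : V3.card = r3)
    (hd12 : Disjoint V1 V2) (hd13 : Disjoint V1 V3) (hd23 : Disjoint V2 V3)
    (hcover : V1 ∪ V2 ∪ V3 = Finset.univ)
    (vlast : Fin d) (hvlast : (vlast : ℕ) = d - 1) (hlast : vlast ∈ V3)
    (c1 c2 c3 : ℤ) (hC : inC3 r1 r2 r3 c1 c2 c3) :
    ∃ x : Fin d → ℝ, (∀ k, -1 < x k ∧ x k ≤ 0) ∧
      ((c1 : ℝ) - 1 < tau3 d V1 V2 V1 vlast x ∧ tau3 d V1 V2 V1 vlast x ≤ (c1 : ℝ)) ∧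
      ((c2 : ℝ) - 1 < tau3 d V1 V2 V2 vlast x ∧ tau3 d V1 V2 V2 vlast x ≤ (c2 : ℝ)) ∧
      ((c3 : ℝ) - 1 < tau3 d V1 V2 V3 vlast x ∧ tau3 d V1 V2 V3 vlast x ≤ (c3 : ℝ)) :=
  stmt_10_general r1 r2 r3 h1 h12 h23 d V1 V2 V3 hc1 hc2 hc3 hd12 hd13 hd23 vlast hlast c1 c2 c3 hC
end

section
/- Let n = 4 with 1 ≤ r_1 ≤ r_2 ≤ r_3 ≤ r_4 and assume d ∈ V_4. For c = (c_1,c_2,c_3,c_4) ∈ ℤ^4, the following are equivalent: (a) there exists x ∈ ℝ^d with −1 < x_k ≤ 0 for all k = 1,…,d and c_j − 1 < τ_j(x) ≤ c_j for j = 1,2,3,4; (b) c ∈ C(r_1,r_2,r_3,r_4). (Consequently the conic divisorial ideals of the edge ring k[K_{r_1,r_2,r_3,r_4}] are in one-to-one correspondence with the lattice points of C(r_1,r_2,r_3,r_4).) -/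
/-!
Write `u_j = -∑_{k ∈ V_j} x_k` for `j = 1, 2, 3` and `w = -x_d`. Then `τ_1 = w - u_2 - u_3`,
and similarly for `τ_2, τ_3`, while `τ_4 = 2w - u_1 - u_2 - u_3 - ∑_{k ∈ V_4 ∖ {d}} x_k`. The last
sum ranges over `(-(r_4 - 1), 0]` (it is `0` if `r_4 = 1`), so after filling in `V_4 ∖ {d}` the
condition on `τ_4` becomes `0 ≤ u_1 + u_2 + u_3 - 2w + c_4 < r_4`: condition (a) is the
solvability of a small system in `u_j ∈ [0, r_j)`, `w ∈ [0, 1)` (`Admissible`). Each inequality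
of `C` is the integer rounding of a linear consequence of that system. Conversely, write
`c_1 + c_2 + c_3 = 2m + e` with `e ∈ {0, 1}`; the integers `n_j = c_j - m` have pairwise sums
`n_i + n_j = e - c_k`, the inequalities of `C` confine them and `c_4 - m` to short ranges, and
a solution is `u_j = n_j + ε_j` with small `ε_j` and `w` chosen according to which ends of those
ranges are attained.
-/

/-- The linear form `τ_j(x) = Σ_{k ∉ V_4} x_k - Σ_{ℓ ∈ V_j} x_ℓ - x_d` (for `n = 4`,
where `vlast` is the last coordinate `d`). -/
noncomputable def tau4 (d : ℕ) (V1 V2 V3 Vj : Finset (Fin d)) (vlast : Fin d)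
    (x : Fin d → ℝ) : ℝ :=
  (∑ k ∈ V1 ∪ V2 ∪ V3, x k) - (∑ k ∈ Vj, x k) - x vlast

/-- Membership of `(z_1,z_2,z_3,z_4) ∈ ℤ^4` in the polytope `C(r_1,r_2,r_3,r_4)`. -/
def inC4 (r1 r2 r3 r4 : ℕ) (z1 z2 z3 z4 : ℤ) : Prop :=
  (-(r2 : ℤ) ≤ z1 - z2 ∧ z1 - z2 ≤ (r1 : ℤ)) ∧
  (-(r3 : ℤ) ≤ z1 - z3 ∧ z1 - z3 ≤ (r1 : ℤ)) ∧
  (-(r4 : ℤ) ≤ z1 - z4 ∧ z1 - z4 ≤ (r1 : ℤ)) ∧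
  (-(r3 : ℤ) ≤ z2 - z3 ∧ z2 - z3 ≤ (r2 : ℤ)) ∧
  (-(r4 : ℤ) ≤ z2 - z4 ∧ z2 - z4 ≤ (r2 : ℤ)) ∧
  (-(r4 : ℤ) ≤ z3 - z4 ∧ z3 - z4 ≤ (r3 : ℤ)) ∧
  (-(r2 : ℤ) - (r3 : ℤ) + 1 ≤ z1 ∧ z1 ≤ 1) ∧
  (-(r1 : ℤ) - (r3 : ℤ) + 1 ≤ z2 ∧ z2 ≤ 1) ∧
  (-(r1 : ℤ) - (r2 : ℤ) + 1 ≤ z3 ∧ z3 ≤ 1) ∧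
  (-2 * (r3 : ℤ) ≤ z1 + z2 - z3 ∧ z1 + z2 - z3 ≤ 2) ∧
  (-2 * (r2 : ℤ) ≤ z1 + z3 - z2 ∧ z1 + z3 - z2 ≤ 2) ∧
  (-2 * (r1 : ℤ) ≤ z2 + z3 - z1 ∧ z2 + z3 - z1 ≤ 2) ∧
  (-(r3 : ℤ) - (r4 : ℤ) + 1 ≤ z1 + z2 - z4 ∧ z1 + z2 - z4 ≤ 1) ∧
  (-(r2 : ℤ) - (r4 : ℤ) + 1 ≤ z1 + z3 - z4 ∧ z1 + z3 - z4 ≤ 1) ∧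
  (-(r1 : ℤ) - (r4 : ℤ) + 1 ≤ z2 + z3 - z4 ∧ z2 + z3 - z4 ≤ 1) ∧
  (-2 * (r4 : ℤ) ≤ z1 + z2 + z3 - 2 * z4 ∧ z1 + z2 + z3 - 2 * z4 ≤ 2)

open Finset

theorem sum_mem_Ioc_of_forall_mem_Ioc {ι : Type*} {s : Finset ι} {x : ι → ℝ} (hs : s.Nonempty)
    (hx : ∀ k ∈ s, -1 < x k ∧ x k ≤ 0) : -(#s : ℝ) < ∑ k ∈ s, x k ∧ ∑ k ∈ s, x k ≤ 0 :=
  ⟨by simpa using sum_lt_sum_of_nonempty hs fun k hk => (hx k hk).1,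
    sum_nonpos fun k hk => (hx k hk).2⟩

theorem neg_div_mem_Ioc {a r : ℝ} (ha : 0 ≤ a) (har : a < r) : -1 < -(a / r) ∧ -(a / r) ≤ 0 :=
  ⟨neg_lt_neg ((div_lt_one (ha.trans_lt har)).2 har),
    neg_nonpos.2 (div_nonneg ha (ha.trans har.le))⟩

theorem sum_eq_neg_of_forall_eq_neg_div {ι : Type*} {s : Finset ι} {x : ι → ℝ} {r : ℕ} {u : ℝ}
    (hc : #s = r) (hr : (r : ℝ) ≠ 0) (h : ∀ k ∈ s, x k = -(u / r)) : ∑ k ∈ s, x k = -u := by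
  rw [sum_eq_card_nsmul h, hc, nsmul_eq_mul]
  field_simp

theorem exists_mem_Ico_near_of_mem_Icc {n : ℤ} {r : ℕ} {ε : ℝ} (hε : 0 < ε) (hε1 : ε ≤ 1)
    (hr : 0 < r) (h0 : 0 ≤ n) (hn : n ≤ r) :
    ∃ u : ℝ, (0 ≤ u ∧ u < r) ∧ n - ε ≤ u ∧ u ≤ n := by
  rcases h0.eq_or_lt with rfl | hpos
  · exact ⟨0, ⟨le_rfl, by exact_mod_cast hr⟩, by simp [hε.le], by simp⟩
  · have h1 : (1 : ℝ) ≤ n := by exact_mod_cast hpos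
    have h2 : (n : ℝ) ≤ r := by exact_mod_cast hn
    exact ⟨n - ε, ⟨by linarith, by linarith⟩, le_rfl, by linarith⟩

def Admissible (r1 r2 r3 r4 : ℕ) (c1 c2 c3 c4 : ℤ) (u1 u2 u3 w : ℝ) : Prop :=
  (0 ≤ u1 ∧ u1 < r1) ∧ (0 ≤ u2 ∧ u2 < r2) ∧ (0 ≤ u3 ∧ u3 < r3) ∧ (0 ≤ w ∧ w < 1) ∧
  ((c1 : ℝ) - 1 < w - u2 - u3 ∧ w - u2 - u3 ≤ c1) ∧
  ((c2 : ℝ) - 1 < w - u1 - u3 ∧ w - u1 - u3 ≤ c2) ∧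
  ((c3 : ℝ) - 1 < w - u1 - u2 ∧ w - u1 - u2 ≤ c3) ∧
  (0 ≤ u1 + u2 + u3 - 2 * w + c4 ∧ u1 + u2 + u3 - 2 * w + c4 < r4)

section Symmetry

variable {r1 r2 r3 r4 : ℕ} {c1 c2 c3 c4 : ℤ} {u1 u2 u3 w : ℝ}

theorem Admissible.swap12 (h : Admissible r2 r1 r3 r4 c2 c1 c3 c4 u2 u1 u3 w) :
    Admissible r1 r2 r3 r4 c1 c2 c3 c4 u1 u2 u3 w := by
  obtain ⟨h2, h1, h3, hw, t2, t1, t3, hK⟩ := h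
  exact ⟨h1, h2, h3, hw, t1, t2, by constructor <;> linarith [t3.1, t3.2],
    by constructor <;> linarith [hK.1, hK.2]⟩

theorem Admissible.swap13 (h : Admissible r3 r2 r1 r4 c3 c2 c1 c4 u3 u2 u1 w) :
    Admissible r1 r2 r3 r4 c1 c2 c3 c4 u1 u2 u3 w := by
  obtain ⟨h3, h2, h1, hw, t3, t2, t1, hK⟩ := h
  exact ⟨h1, h2, h3, hw, by constructor <;> linarith [t1.1, t1.2],
    by constructor <;> linarith [t2.1, t2.2], by constructor <;> linarith [t3.1, t3.2],
    by constructor <;> linarith [hK.1, hK.2]⟩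

theorem inC4.swap12 (h : inC4 r1 r2 r3 r4 c1 c2 c3 c4) : inC4 r2 r1 r3 r4 c2 c1 c3 c4 := by
  unfold inC4 at *
  omega

theorem inC4.swap13 (h : inC4 r1 r2 r3 r4 c1 c2 c3 c4) : inC4 r3 r2 r1 r4 c3 c2 c1 c4 := by
  unfold inC4 at *
  omega

end Symmetry

theorem inC4_of_admissible {r1 r2 r3 r4 : ℕ} {c1 c2 c3 c4 : ℤ} {u1 u2 u3 w : ℝ}
    (h : Admissible r1 r2 r3 r4 c1 c2 c3 c4 u1 u2 u3 w) : inC4 r1 r2 r3 r4 c1 c2 c3 c4 := by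
  obtain ⟨⟨hu1, hu1'⟩, ⟨hu2, hu2'⟩, ⟨hu3, hu3'⟩, ⟨hw, hw'⟩, ⟨t1, t1'⟩, ⟨t2, t2'⟩, ⟨t3, t3'⟩,
    ⟨hK, hK'⟩⟩ := h
  unfold inC4
  and_intros <;>
    (apply Int.le_of_lt_add_one; rw [← Int.cast_lt (R := ℝ)]; push_cast; linarith)

section Witnesses

variable {r1 r2 r3 r4 : ℕ} {c1 c2 c3 c4 : ℤ}

theorem exists_admissible_of_even_of_extreme (hr1 : 1 ≤ r1) (hC : inC4 r1 r2 r3 r4 c1 c2 c3 c4)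
    {m : ℤ} (hm : c1 + c2 + c3 = 2 * m) (h : c1 - m = -1 ∨ c1 - m = r1) :
    ∃ u1 u2 u3 w, Admissible r1 r2 r3 r4 c1 c2 c3 c4 u1 u2 u3 w := by
  unfold inC4 at hC
  obtain ⟨n2, n2', n3, n3', N, N'⟩ : 0 ≤ c2 - m ∧ c2 - m + 1 ≤ r2 ∧ 0 ≤ c3 - m ∧
      c3 - m + 1 ≤ r3 ∧ 0 ≤ c4 - m ∧ c4 - m + 1 ≤ r4 := by omega
  rify at hr1 hm h n2 n2' n3 n3' N N'
  rcases h with h | h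
  · refine ⟨0, c2 - m + 1/3, c3 - m + 1/3, 2/3, ?_⟩
    unfold Admissible
    and_intros <;> linarith
  · refine ⟨r1 - 3/16, c2 - m + 7/16, c3 - m + 7/16, 1/8, ?_⟩
    unfold Admissible
    and_intros <;> linarith

theorem exists_admissible_of_even_of_interior (hr4 : 1 ≤ r4) (hC : inC4 r1 r2 r3 r4 c1 c2 c3 c4)
    {m : ℤ} (hm : c1 + c2 + c3 = 2 * m) (h1 : 0 ≤ c1 - m ∧ c1 - m + 1 ≤ r1)
    (h2 : 0 ≤ c2 - m ∧ c2 - m + 1 ≤ r2) (h3 : 0 ≤ c3 - m ∧ c3 - m + 1 ≤ r3) :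
    ∃ u1 u2 u3 w, Admissible r1 r2 r3 r4 c1 c2 c3 c4 u1 u2 u3 w := by
  unfold inC4 at hC
  obtain ⟨w, hw, hw', hK, hK'⟩ : ∃ w : ℝ, 0 < w ∧ w < 1 ∧ 0 ≤ c4 - m + 3/2 - 2 * w ∧
      c4 - m + 3/2 - 2 * w < r4 := by
    rcases (show c4 - m = -1 ∨ c4 - m = r4 ∨ (0 ≤ c4 - m ∧ c4 - m + 1 ≤ r4) by omega)
      with hN | hN | ⟨hN, hN'⟩ <;> rify at hr4 hN
    · exact ⟨1/8, by norm_num, by norm_num, by linarith, by linarith⟩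
    · exact ⟨7/8, by norm_num, by norm_num, by linarith, by linarith⟩
    · rify at hN'
      exact ⟨1/2, by norm_num, by norm_num, by linarith, by linarith⟩
  rify at hm h1 h2 h3
  refine ⟨c1 - m + 1/2, c2 - m + 1/2, c3 - m + 1/2, w, ?_⟩
  unfold Admissible
  and_intros <;> linarith [h1.1, h1.2, h2.1, h2.2, h3.1, h3.2]

theorem exists_admissible_of_odd (hr1 : 1 ≤ r1) (hr2 : 1 ≤ r2) (hr3 : 1 ≤ r3) (hr4 : 1 ≤ r4)
    (hC : inC4 r1 r2 r3 r4 c1 c2 c3 c4) {m : ℤ} (hm : c1 + c2 + c3 = 2 * m + 1) :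
    ∃ u1 u2 u3 w, Admissible r1 r2 r3 r4 c1 c2 c3 c4 u1 u2 u3 w := by
  unfold inC4 at hC
  obtain ⟨u1, hu1, hu1l, hu1u⟩ :=
    exists_mem_Ico_near_of_mem_Icc (ε := 1/8) (by norm_num) (by norm_num) hr1 (n := c1 - m)
      (by omega) (by omega)
  obtain ⟨u2, hu2, hu2l, hu2u⟩ :=
    exists_mem_Ico_near_of_mem_Icc (ε := 1/8) (by norm_num) (by norm_num) hr2 (n := c2 - m)
      (by omega) (by omega)
  obtain ⟨u3, hu3, hu3l, hu3u⟩ :=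
    exists_mem_Ico_near_of_mem_Icc (ε := 1/8) (by norm_num) (by norm_num) hr3 (n := c3 - m)
      (by omega) (by omega)
  push_cast at hu1l hu1u hu2l hu2u hu3l hu3u
  obtain ⟨w, hw, hw', hK, hK'⟩ : ∃ w : ℝ, 0 < w ∧ w ≤ 3/4 ∧ 0 ≤ c4 - m + 5/8 - 2 * w ∧
      c4 - m + 1 - 2 * w < r4 := by
    rcases (show 0 ≤ c4 - m ∧ c4 - m + 1 ≤ r4 ∨ c4 - m = r4 by omega) with ⟨hN, hN'⟩ | hN
    · rify at hN hN'
      exact ⟨1/4, by norm_num, by norm_num, by linarith, by linarith⟩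
    · rify at hr4 hN
      exact ⟨3/4, by norm_num, by norm_num, by linarith, by linarith⟩
  rify at hm
  refine ⟨u1, u2, u3, w, ?_⟩
  unfold Admissible
  and_intros <;> linarith [hu1.1, hu1.2, hu2.1, hu2.2, hu3.1, hu3.2]

theorem exists_admissible_of_even (hr1 : 1 ≤ r1) (hr2 : 1 ≤ r2) (hr3 : 1 ≤ r3) (hr4 : 1 ≤ r4)
    (hC : inC4 r1 r2 r3 r4 c1 c2 c3 c4) {m : ℤ} (hm : c1 + c2 + c3 = 2 * m) :
    ∃ u1 u2 u3 w, Admissible r1 r2 r3 r4 c1 c2 c3 c4 u1 u2 u3 w := by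
  by_cases h1 : c1 - m = -1 ∨ c1 - m = r1
  · exact exists_admissible_of_even_of_extreme hr1 hC hm h1
  by_cases h2 : c2 - m = -1 ∨ c2 - m = r2
  · obtain ⟨u2, u1, u3, w, h⟩ :=
      exists_admissible_of_even_of_extreme hr2 hC.swap12 (by omega) h2
    exact ⟨u1, u2, u3, w, h.swap12⟩
  by_cases h3 : c3 - m = -1 ∨ c3 - m = r3
  · obtain ⟨u3, u2, u1, w, h⟩ :=
      exists_admissible_of_even_of_extreme hr3 hC.swap13 (by omega) h3
    exact ⟨u1, u2, u3, w, h.swap13⟩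
  refine exists_admissible_of_even_of_interior hr4 hC hm ?_ ?_ ?_ <;> unfold inC4 at hC <;> omega

theorem exists_admissible_of_inC4 (hr1 : 1 ≤ r1) (hr2 : 1 ≤ r2) (hr3 : 1 ≤ r3) (hr4 : 1 ≤ r4)
    (hC : inC4 r1 r2 r3 r4 c1 c2 c3 c4) :
    ∃ u1 u2 u3 w, Admissible r1 r2 r3 r4 c1 c2 c3 c4 u1 u2 u3 w := by
  obtain ⟨m, hm | hm⟩ : ∃ m, c1 + c2 + c3 = 2 * m ∨ c1 + c2 + c3 = 2 * m + 1 :=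
    ⟨(c1 + c2 + c3) / 2, by omega⟩
  · exact exists_admissible_of_even hr1 hr2 hr3 hr4 hC hm
  · exact exists_admissible_of_odd hr1 hr2 hr3 hr4 hC hm

end Witnesses

section Blocks

variable {d : ℕ} {V1 V2 V3 V4 : Finset (Fin d)} {vlast : Fin d} {r1 r2 r3 r4 : ℕ}
  {c1 c2 c3 c4 : ℤ}

theorem tau4_eq (h12 : Disjoint V1 V2) (h13 : Disjoint V1 V3) (h23 : Disjoint V2 V3)
    (Vj : Finset (Fin d)) (x : Fin d → ℝ) :
    tau4 d V1 V2 V3 Vj vlast x =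
      ∑ k ∈ V1, x k + ∑ k ∈ V2, x k + ∑ k ∈ V3, x k - ∑ k ∈ Vj, x k - x vlast := by
  rw [tau4, sum_union (disjoint_union_left.2 ⟨h13, h23⟩), sum_union h12]

theorem admissible_of_tau4 (h12 : Disjoint V1 V2) (h13 : Disjoint V1 V3) (h23 : Disjoint V2 V3)
    (hc1 : #V1 = r1) (hc2 : #V2 = r2) (hc3 : #V3 = r3) (hc4 : #V4 = r4) (hlast : vlast ∈ V4)
    (hr1 : 0 < r1) (hr2 : 0 < r2) (hr3 : 0 < r3) {x : Fin d → ℝ}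
    (hx : ∀ k, -1 < x k ∧ x k ≤ 0)
    (t1 : (c1 : ℝ) - 1 < tau4 d V1 V2 V3 V1 vlast x ∧ tau4 d V1 V2 V3 V1 vlast x ≤ c1)
    (t2 : (c2 : ℝ) - 1 < tau4 d V1 V2 V3 V2 vlast x ∧ tau4 d V1 V2 V3 V2 vlast x ≤ c2)
    (t3 : (c3 : ℝ) - 1 < tau4 d V1 V2 V3 V3 vlast x ∧ tau4 d V1 V2 V3 V3 vlast x ≤ c3)
    (t4 : (c4 : ℝ) - 1 < tau4 d V1 V2 V3 V4 vlast x ∧ tau4 d V1 V2 V3 V4 vlast x ≤ c4) :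
    Admissible r1 r2 r3 r4 c1 c2 c3 c4
      (-∑ k ∈ V1, x k) (-∑ k ∈ V2, x k) (-∑ k ∈ V3, x k) (-x vlast) := by
  have hV : ∀ {V : Finset (Fin d)} {r : ℕ}, #V = r → 0 < r →
      -(r : ℝ) < ∑ k ∈ V, x k ∧ ∑ k ∈ V, x k ≤ 0 := fun hc hr => by
    rw [← hc]
    exact sum_mem_Ioc_of_forall_mem_Ioc (card_pos.1 (hc ▸ hr)) fun k _ => hx k
  obtain ⟨s1, s1'⟩ := hV hc1 hr1
  obtain ⟨s2, s2'⟩ := hV hc2 hr2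
  obtain ⟨s3, s3'⟩ := hV hc3 hr3
  have s4 : -(#(V4.erase vlast) : ℝ) ≤ ∑ k ∈ V4.erase vlast, x k := by
    simpa using card_nsmul_le_sum _ _ (-1 : ℝ) fun k _ => (hx k).1.le
  have s4' : ∑ k ∈ V4.erase vlast, x k ≤ 0 := sum_nonpos fun k _ => (hx k).2
  have hcard : (#(V4.erase vlast) : ℝ) + 1 = r4 := by
    rw [← hc4, ← card_erase_add_one hlast]; push_cast; rfl
  rw [tau4_eq h12 h13 h23] at t1 t2 t3 t4
  rw [← add_sum_erase V4 x hlast] at t4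
  unfold Admissible
  and_intros <;> linarith [hx vlast, t1.1, t1.2, t2.1, t2.2, t3.1, t3.2, t4.1, t4.2]

theorem exists_tau4_of_admissible (h12 : Disjoint V1 V2) (h13 : Disjoint V1 V3)
    (h14 : Disjoint V1 V4) (h23 : Disjoint V2 V3) (h24 : Disjoint V2 V4) (h34 : Disjoint V3 V4)
    (hc1 : #V1 = r1) (hc2 : #V2 = r2) (hc3 : #V3 = r3) (hc4 : #V4 = r4) (hlast : vlast ∈ V4)
    {u1 u2 u3 w : ℝ} (h : Admissible r1 r2 r3 r4 c1 c2 c3 c4 u1 u2 u3 w) :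
    ∃ x : Fin d → ℝ, (∀ k, -1 < x k ∧ x k ≤ 0) ∧
      ((c1 : ℝ) - 1 < tau4 d V1 V2 V3 V1 vlast x ∧ tau4 d V1 V2 V3 V1 vlast x ≤ c1) ∧
      ((c2 : ℝ) - 1 < tau4 d V1 V2 V3 V2 vlast x ∧ tau4 d V1 V2 V3 V2 vlast x ≤ c2) ∧
      ((c3 : ℝ) - 1 < tau4 d V1 V2 V3 V3 vlast x ∧ tau4 d V1 V2 V3 V3 vlast x ≤ c3) ∧
      ((c4 : ℝ) - 1 < tau4 d V1 V2 V3 V4 vlast x ∧ tau4 d V1 V2 V3 V4 vlast x ≤ c4) := by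
  classical
  obtain ⟨⟨hu1, hu1'⟩, ⟨hu2, hu2'⟩, ⟨hu3, hu3'⟩, ⟨hw, hw'⟩, t1, t2, t3, ⟨hK, hK'⟩⟩ := h
  set K := u1 + u2 + u3 - 2 * w + c4
  have hq := neg_div_mem_Ioc hK hK'
  -- On `V4.erase vlast` the value `-K / r4` makes `τ4 = c4 - K / r4`.
  let x : Fin d → ℝ := fun k =>
    if k ∈ V1 then -(u1 / r1) else if k ∈ V2 then -(u2 / r2) else if k ∈ V3 then -(u3 / r3)
    else if k = vlast then -w else -(K / r4)
  have hx : ∀ k, -1 < x k ∧ x k ≤ 0 := fun k => by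
    simp only [x]
    split_ifs
    exacts [neg_div_mem_Ioc hu1 hu1', neg_div_mem_Ioc hu2 hu2', neg_div_mem_Ioc hu3 hu3',
      ⟨by linarith, by linarith⟩, hq]
  have s1 : ∑ k ∈ V1, x k = -u1 :=
    sum_eq_neg_of_forall_eq_neg_div hc1 (hu1.trans_lt hu1').ne' fun k hk => if_pos hk
  have s2 : ∑ k ∈ V2, x k = -u2 :=
    sum_eq_neg_of_forall_eq_neg_div hc2 (hu2.trans_lt hu2').ne' fun k hk => by
      simp [x, hk, disjoint_right.1 h12 hk]
  have s3 : ∑ k ∈ V3, x k = -u3 :=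
    sum_eq_neg_of_forall_eq_neg_div hc3 (hu3.trans_lt hu3').ne' fun k hk => by
      simp [x, hk, disjoint_right.1 h13 hk, disjoint_right.1 h23 hk]
  have slast : x vlast = -w := by
    simp [x, disjoint_right.1 h14 hlast, disjoint_right.1 h24 hlast, disjoint_right.1 h34 hlast]
  have s4 : ∑ k ∈ V4.erase vlast, x k = K / r4 - K := by
    rw [sum_eq_card_nsmul (b := -(K / r4)) fun k hk => ?_, nsmul_eq_mul]
    · have hcard : (#(V4.erase vlast) : ℝ) = r4 - 1 := by
        rw [← hc4, ← card_erase_add_one hlast]; push_cast; ring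
      rw [hcard]
      field_simp [(hK.trans_lt hK').ne']
      ring
    · obtain ⟨hne, hk4⟩ := mem_erase.1 hk
      simp [x, hne, disjoint_right.1 h14 hk4, disjoint_right.1 h24 hk4, disjoint_right.1 h34 hk4]
  refine ⟨x, hx, ?_⟩
  simp only [tau4_eq h12 h13 h23, ← add_sum_erase V4 x hlast, s1, s2, s3, s4, slast]
  refine ⟨?_, ?_, ?_, ?_⟩ <;> constructor <;>
    linarith [t1.1, t1.2, t2.1, t2.2, t3.1, t3.2, hq.1, hq.2]

end Blocks

theorem stmt_13_general (r1 r2 r3 r4 : ℕ) (h1 : 1 ≤ r1) (h12 : r1 ≤ r2) (h23 : r2 ≤ r3)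
    (h34 : r3 ≤ r4)
    (d : ℕ)
    (V1 V2 V3 V4 : Finset (Fin d))
    (hc1 : V1.card = r1) (hc2 : V2.card = r2) (hc3 : V3.card = r3) (hc4 : V4.card = r4)
    (hd12 : Disjoint V1 V2) (hd13 : Disjoint V1 V3) (hd14 : Disjoint V1 V4)
    (hd23 : Disjoint V2 V3) (hd24 : Disjoint V2 V4) (hd34 : Disjoint V3 V4)
    (vlast : Fin d) (hlast : vlast ∈ V4)
    (c1 c2 c3 c4 : ℤ) :
    (∃ x : Fin d → ℝ, (∀ k, -1 < x k ∧ x k ≤ 0) ∧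
      ((c1 : ℝ) - 1 < tau4 d V1 V2 V3 V1 vlast x ∧
        tau4 d V1 V2 V3 V1 vlast x ≤ (c1 : ℝ)) ∧
      ((c2 : ℝ) - 1 < tau4 d V1 V2 V3 V2 vlast x ∧
        tau4 d V1 V2 V3 V2 vlast x ≤ (c2 : ℝ)) ∧
      ((c3 : ℝ) - 1 < tau4 d V1 V2 V3 V3 vlast x ∧
        tau4 d V1 V2 V3 V3 vlast x ≤ (c3 : ℝ)) ∧
      ((c4 : ℝ) - 1 < tau4 d V1 V2 V3 V4 vlast x ∧
        tau4 d V1 V2 V3 V4 vlast x ≤ (c4 : ℝ)))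
    ↔ inC4 r1 r2 r3 r4 c1 c2 c3 c4 := by
  constructor
  · rintro ⟨x, hx, t1, t2, t3, t4⟩
    exact inC4_of_admissible <| admissible_of_tau4 hd12 hd13 hd23 hc1 hc2 hc3 hc4 hlast
      (by omega) (by omega) (by omega) hx t1 t2 t3 t4
  · intro hC
    obtain ⟨u1, u2, u3, w, h⟩ := exists_admissible_of_inC4 h1 (by omega) (by omega) (by omega) hC
    exact exists_tau4_of_admissible hd12 hd13 hd14 hd23 hd24 hd34 hc1 hc2 hc3 hc4 hlast h

/-- For `n = 4`, `1 ≤ r_1 ≤ r_2 ≤ r_3 ≤ r_4` and `c ∈ ℤ^4` the following are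
equivalent: (a) there is `x ∈ (-1,0]^d` with `c_j - 1 < τ_j(x) ≤ c_j` for
`j = 1,2,3,4`; (b) `c ∈ C(r_1,r_2,r_3,r_4)`.  (These classes index the conic divisorial
ideals of `k[K_{r_1,r_2,r_3,r_4}]`.) -/
theorem stmt_13 (r1 r2 r3 r4 : ℕ) (h1 : 1 ≤ r1) (h12 : r1 ≤ r2) (h23 : r2 ≤ r3)
    (h34 : r3 ≤ r4)
    (d : ℕ) (hd : d = r1 + r2 + r3 + r4)
    (V1 V2 V3 V4 : Finset (Fin d))
    (hc1 : V1.card = r1) (hc2 : V2.card = r2) (hc3 : V3.card = r3) (hc4 : V4.card = r4)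
    (hd12 : Disjoint V1 V2) (hd13 : Disjoint V1 V3) (hd14 : Disjoint V1 V4)
    (hd23 : Disjoint V2 V3) (hd24 : Disjoint V2 V4) (hd34 : Disjoint V3 V4)
    (hcover : V1 ∪ V2 ∪ V3 ∪ V4 = Finset.univ)
    (vlast : Fin d) (hvlast : (vlast : ℕ) = d - 1) (hlast : vlast ∈ V4)
    (c1 c2 c3 c4 : ℤ) :
    (∃ x : Fin d → ℝ, (∀ k, -1 < x k ∧ x k ≤ 0) ∧
      ((c1 : ℝ) - 1 < tau4 d V1 V2 V3 V1 vlast x ∧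
        tau4 d V1 V2 V3 V1 vlast x ≤ (c1 : ℝ)) ∧
      ((c2 : ℝ) - 1 < tau4 d V1 V2 V3 V2 vlast x ∧
        tau4 d V1 V2 V3 V2 vlast x ≤ (c2 : ℝ)) ∧
      ((c3 : ℝ) - 1 < tau4 d V1 V2 V3 V3 vlast x ∧
        tau4 d V1 V2 V3 V3 vlast x ≤ (c3 : ℝ)) ∧
      ((c4 : ℝ) - 1 < tau4 d V1 V2 V3 V4 vlast x ∧
        tau4 d V1 V2 V3 V4 vlast x ≤ (c4 : ℝ)))
    ↔ inC4 r1 r2 r3 r4 c1 c2 c3 c4 :=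
  stmt_13_general r1 r2 r3 r4 h1 h12 h23 h34 d V1 V2 V3 V4 hc1 hc2 hc3 hc4 hd12 hd13 hd14 hd23 hd24
    hd34 vlast hlast c1 c2 c3 c4
end

section
/- Let f : ℝ^d → ℝ^n be a linear map, let K ⊆ ℝ^d be a convex set, and let S ⊆ ℝ^n be a finite set such that for every v ∈ S there exists x_v ∈ K with v_j − 1 < f(x_v)_j ≤ v_j for all j = 1,…,n. Then for every point c in the convex hull of S there exists x ∈ K with c_j − 1 < f(x)_j ≤ c_j for all j = 1,…,n. -/
/-- Reduction to vertices: if `f : ℝ^d → ℝ^n` is linear, `K ⊆ ℝ^d` is convex, and `S`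
is a finite set of points such that every `v ∈ S` admits `x_v ∈ K` with
`v_j - 1 < f(x_v)_j ≤ v_j` for all `j`, then every point `c` of the convex hull of `S`
admits `x ∈ K` with `c_j - 1 < f(x)_j ≤ c_j` for all `j`. -/
theorem stmt_14 (d n : ℕ) (f : (Fin d → ℝ) →ₗ[ℝ] (Fin n → ℝ))
    (K : Set (Fin d → ℝ)) (hK : Convex ℝ K)
    (S : Finset (Fin n → ℝ))
    (hS : ∀ v ∈ S, ∃ x ∈ K, ∀ j, v j - 1 < f x j ∧ f x j ≤ v j) :
    ∀ c ∈ convexHull ℝ (S : Set (Fin n → ℝ)),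
      ∃ x ∈ K, ∀ j, c j - 1 < f x j ∧ f x j ≤ c j := by
  intro c hc
  choose g hgK hg using hS
  rw [Finset.convexHull_eq] at hc
  obtain ⟨w, hw0, hw1, hwc⟩ := hc
  -- a vertex with positive weight
  have hpos : ∃ v ∈ S, 0 < w v := by
    by_contra h
    push_neg at h
    have : ∑ v ∈ S, w v = 0 := Finset.sum_eq_zero fun v hv =>
      le_antisymm (h v hv) (hw0 v hv)
    rw [hw1] at this; norm_num at this
  obtain ⟨v₀, hv₀, hv₀pos⟩ := hpos
  refine ⟨∑ v ∈ S.attach, w v • g v v.2, ?_, ?_⟩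
  · apply hK.sum_mem
    · intro v _; exact hw0 v v.2
    · rw [← hw1, ← Finset.sum_attach S w]
    · intro v _; exact hgK v v.2
  · have hc' : c = ∑ v ∈ S.attach, w v • (v : Fin n → ℝ) := by
      rw [← hwc, Finset.centerMass_eq_of_sum_1 _ _ hw1,
        ← Finset.sum_attach S (fun v => w v • id v)]
      rfl
    intro j
    have hfx : f (∑ v ∈ S.attach, w v • g v v.2) j
        = ∑ v ∈ S.attach, w v * f (g v v.2) j := by
      rw [map_sum]
      simp [Finset.sum_apply]
    have hcj : c j = ∑ v ∈ S.attach, w v * (v : Fin n → ℝ) j := by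
      rw [hc']; simp [Finset.sum_apply]
    have hwsum : ∑ v ∈ S.attach, w v = 1 := by
      rw [← hw1, Finset.sum_attach S w]
    constructor
    · rw [hfx, hcj, ← hwsum, ← Finset.sum_sub_distrib]
      apply Finset.sum_lt_sum
      · intro v _
        have := (hg v v.2 j).1
        have hwv := hw0 v v.2
        nlinarith
      · refine ⟨⟨v₀, hv₀⟩, Finset.mem_attach _ _, ?_⟩
        have := (hg v₀ hv₀ j).1
        nlinarith
    · rw [hfx, hcj]
      apply Finset.sum_le_sum
      intro v _
      exact mul_le_mul_of_nonneg_left (hg v v.2 j).2 (hw0 v v.2)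
end

section
/- Let 2 ≤ r_1 ≤ r_2 ≤ r_3. Then the polytope C(r_1,r_2,r_3) equals the convex hull in ℝ^3 of the following eight points: (1,1,1), (1,1,r_3+1), (1,−r_1+1,−r_1+r_3+1), (−r_2+1,1,−r_2+r_3+1), (−r_2+1,−r_1+1,−r_1−r_2+1), (−r_2+1,−r_1+1,−r_1−r_2+r_3+1), (1,−r_1+1,−r_1+1), and (−r_2+1,1,−r_2+1); these are exactly the vertices of C(r_1,r_2,r_3). -/
/-!
In the coordinates `w = (z₀, z₁, z₂ - z₀ - z₁)`, six of the twelve inequalities defining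
`C(r₁,r₂,r₃)` say that `w` lies in the box `[1 - r₂, 1] × [1 - r₁, 1] × [-1, r₃ - 1]`, and
the other six are sums of these. So the polytope is the image of a box under a linear
automorphism of `ℝ³`, and both claims follow from the box case: a box is the convex hull of
its corners and these are its extreme points. The eight listed points are the images of the
corners.
-/

open Set

/-- The polytope `C(r_1,r_2,r_3) ⊆ ℝ^3` (coordinates `z 0, z 1, z 2`). -/
def C3set (r1 r2 r3 : ℕ) : Set (Fin 3 → ℝ) :=
  {z | -(r2 : ℝ) ≤ z 0 - z 1 ∧ z 0 - z 1 ≤ (r1 : ℝ) ∧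
       -(r3 : ℝ) ≤ z 0 - z 2 ∧ z 0 - z 2 ≤ (r1 : ℝ) ∧
       -(r3 : ℝ) ≤ z 1 - z 2 ∧ z 1 - z 2 ≤ (r2 : ℝ) ∧
       -(r2 : ℝ) + 1 ≤ z 0 ∧ z 0 ≤ 1 ∧
       -(r1 : ℝ) + 1 ≤ z 1 ∧ z 1 ≤ 1 ∧
       -(r3 : ℝ) + 1 ≤ z 0 + z 1 - z 2 ∧ z 0 + z 1 - z 2 ≤ 1}

/-- The eight claimed vertices of `C(r_1,r_2,r_3)`. -/
def C3verts (r1 r2 r3 : ℕ) : Set (Fin 3 → ℝ) :=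
  { ![1, 1, 1],
    ![1, 1, (r3 : ℝ) + 1],
    ![1, -(r1 : ℝ) + 1, -(r1 : ℝ) + (r3 : ℝ) + 1],
    ![-(r2 : ℝ) + 1, 1, -(r2 : ℝ) + (r3 : ℝ) + 1],
    ![-(r2 : ℝ) + 1, -(r1 : ℝ) + 1, -(r1 : ℝ) - (r2 : ℝ) + 1],
    ![-(r2 : ℝ) + 1, -(r1 : ℝ) + 1, -(r1 : ℝ) - (r2 : ℝ) + (r3 : ℝ) + 1],
    ![1, -(r1 : ℝ) + 1, -(r1 : ℝ) + 1],
    ![-(r2 : ℝ) + 1, 1, -(r2 : ℝ) + 1] }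

lemma convexHull_pi_pair {ι : Type*} [Finite ι] {a b : ι → ℝ} (hab : a ≤ b) :
    convexHull ℝ (univ.pi fun i => ({a i, b i} : Set ℝ)) = Icc a b := by
  simp [convexHull_pair, segment_eq_Icc (hab _), Set.pi_univ_Icc]

lemma extremePoints_Icc_pi {ι : Type*} {a b : ι → ℝ} (hab : a ≤ b) :
    extremePoints ℝ (Icc a b) = univ.pi fun i => ({a i, b i} : Set ℝ) := by
  simp [← Set.pi_univ_Icc, extremePoints_Icc (hab _)]

def shear3 {R : Type*} [CommRing R] : (Fin 3 → R) ≃ₗ[R] (Fin 3 → R) where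
  toFun w := ![w 0, w 1, w 0 + w 1 + w 2]
  invFun z := ![z 0, z 1, z 2 - z 0 - z 1]
  map_add' x y := by ext i; fin_cases i <;> simp; ring
  map_smul' c x := by ext i; fin_cases i <;> simp; ring
  left_inv w := by ext i; fin_cases i <;> simp; ring
  right_inv z := by ext i; fin_cases i <;> simp

lemma shear3_symm_apply {R : Type*} [CommRing R] (z : Fin 3 → R) :
    shear3.symm z = ![z 0, z 1, z 2 - z 0 - z 1] := rfl

def C3lo (r1 r2 : ℕ) : Fin 3 → ℝ := ![1 - r2, 1 - r1, -1]

def C3hi (r3 : ℕ) : Fin 3 → ℝ := ![1, 1, r3 - 1]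

lemma C3lo_le_C3hi (r1 r2 r3 : ℕ) : C3lo r1 r2 ≤ C3hi r3 := by
  intro i; fin_cases i <;> simp [C3lo, C3hi]

lemma C3set_eq_image_Icc (r1 r2 r3 : ℕ) :
    C3set r1 r2 r3 = shear3 '' Icc (C3lo r1 r2) (C3hi r3) := by
  ext z
  simp only [LinearEquiv.image_eq_preimage_symm, mem_preimage, shear3_symm_apply, ← pi_univ_Icc,
    mem_univ_pi, Fin.forall_fin_succ, C3set, C3lo, C3hi, mem_Icc, Matrix.cons_val_zero,
    Matrix.cons_val_one, Matrix.cons_val_two, Matrix.head_cons, Matrix.tail_cons,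
    Fin.succ_zero_eq_one, Fin.succ_one_eq_two, IsEmpty.forall_iff, and_true]
  constructor
  · rintro ⟨-, -, -, -, -, -, h₀, h₀', h₁, h₁', h₂, h₂'⟩
    refine ⟨⟨?_, ?_⟩, ⟨?_, ?_⟩, ?_, ?_⟩ <;> linarith
  · rintro ⟨⟨h₀, h₀'⟩, ⟨h₁, h₁'⟩, h₂, h₂'⟩
    refine ⟨?_, ?_, ?_, ?_, ?_, ?_, ?_, ?_, ?_, ?_, ?_, ?_⟩ <;> linarith

lemma C3verts_eq_image_corners (r1 r2 r3 : ℕ) :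
    C3verts r1 r2 r3 = shear3 '' univ.pi fun i => {C3lo r1 r2 i, C3hi r3 i} := by
  ext z
  simp only [LinearEquiv.image_eq_preimage_symm, mem_preimage, shear3_symm_apply, mem_univ_pi,
    Fin.forall_fin_succ, C3verts, C3lo, C3hi, mem_insert_iff, mem_singleton_iff, funext_iff,
    Matrix.cons_val_zero, Matrix.cons_val_one, Matrix.cons_val_two, Matrix.head_cons,
    Matrix.tail_cons, Fin.succ_zero_eq_one, Fin.succ_one_eq_two, IsEmpty.forall_iff, and_true]
  grind

theorem stmt_15_general (r1 r2 r3 : ℕ) :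
    C3set r1 r2 r3 = convexHull ℝ (C3verts r1 r2 r3) ∧
    Set.extremePoints ℝ (C3set r1 r2 r3) = C3verts r1 r2 r3 := by
  have hbox := C3lo_le_C3hi r1 r2 r3
  rw [C3set_eq_image_Icc, C3verts_eq_image_corners]
  constructor
  · rw [← convexHull_pi_pair hbox]
    exact shear3.toLinearMap.image_convexHull _
  · rw [← image_extremePoints, extremePoints_Icc_pi hbox]

/-- For `2 ≤ r_1 ≤ r_2 ≤ r_3`, the polytope `C(r_1,r_2,r_3)` is the convex hull of the
eight listed points, and these are exactly its vertices (extreme points). -/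
theorem stmt_15 (r1 r2 r3 : ℕ) (h1 : 2 ≤ r1) (h12 : r1 ≤ r2) (h23 : r2 ≤ r3) :
    C3set r1 r2 r3 = convexHull ℝ (C3verts r1 r2 r3) ∧
    Set.extremePoints ℝ (C3set r1 r2 r3) = C3verts r1 r2 r3 :=
  stmt_15_general r1 r2 r3
end
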